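/- arXiv:1409.6773 — 2 statements merged into one kernel-verified Lean document; each statement's English description precedes it below -/
import Mathlib

section
/- Assume the biadmissible family {U(ρ,τ) : ρ, τ ∈ 𝒯} is URCE. Then A̅ ≤ V̅, i.e. inf_{𝛒 ∈ 𝕋^i} sup_{τ ∈ 𝒯} E[U(𝛒(τ),τ)] ≤ inf_{ρ ∈ 𝒯} sup_{τ ∈ 𝒯} E[V¹(τ)·1_{τ ≤ ρ} + V²(ρ)·1_{τ > ρ}]. -/
open MeasureTheory Filter Set

namespace OSG

variable {Ω : Type*} {m : MeasurableSpace Ω}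

/-- The set of `𝔽`-stopping times with values in `[0, T]`. -/
def ST (𝓕 : Filtration ℝ m) (T : ℝ) : Set (Ω → ℝ) :=
  {σ | IsStoppingTime 𝓕 (fun ω => (σ ω : WithTop ℝ)) ∧ ∀ ω, σ ω ∈ Set.Icc (0 : ℝ) T}

/-- `𝒯_{σ+}` : stopping times strictly after `σ` (equal to `T` where `σ = T`). -/
def STplus (𝓕 : Filtration ℝ m) (μ : Measure Ω) (T : ℝ) (σ : Ω → ℝ) : Set (Ω → ℝ) :=
  {ρ | ρ ∈ ST 𝓕 T ∧ ∀ᵐ ω ∂μ, (σ ω < T → σ ω < ρ ω) ∧ (σ ω = T → ρ ω = T)}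

/-- The filtration satisfies the usual conditions: completeness and right continuity on `[0,T)`. -/
def UsualConditions (𝓕 : Filtration ℝ m) (μ : Measure Ω) (T : ℝ) : Prop :=
  (∀ s : Set Ω, μ s = 0 → MeasurableSet[𝓕 0] s) ∧
  (∀ t : ℝ, t ∈ Set.Ico (0 : ℝ) T → (𝓕 t : MeasurableSpace Ω) = ⨅ u ∈ Set.Ioc t T, 𝓕 u)

/-- Stopping strategies of Type I. -/
def TypeI (𝓕 : Filtration ℝ m) (μ : Measure Ω) (T : ℝ) (r : (Ω → ℝ) → Ω → ℝ) : Prop :=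
  (∀ σ ∈ ST 𝓕 T, r σ ∈ ST 𝓕 T) ∧
  ∀ σ₁ ∈ ST 𝓕 T, ∀ σ₂ ∈ ST 𝓕 T, ∀ᵐ ω ∂μ,
    (r σ₁ ω = r σ₂ ω ∧ r σ₁ ω ≤ min (σ₁ ω) (σ₂ ω)) ∨
    min (σ₁ ω) (σ₂ ω) < min (r σ₁ ω) (r σ₂ ω)

/-- Stopping strategies of Type II. -/
def TypeII (𝓕 : Filtration ℝ m) (μ : Measure Ω) (T : ℝ) (r : (Ω → ℝ) → Ω → ℝ) : Prop :=
  (∀ σ ∈ ST 𝓕 T, r σ ∈ ST 𝓕 T) ∧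
  ∀ σ₁ ∈ ST 𝓕 T, ∀ σ₂ ∈ ST 𝓕 T, ∀ᵐ ω ∂μ,
    (r σ₁ ω = r σ₂ ω ∧ r σ₁ ω < min (σ₁ ω) (σ₂ ω)) ∨
    min (σ₁ ω) (σ₂ ω) ≤ min (r σ₁ ω) (r σ₂ ω)

/-- Biadmissible family `{U(ρ,τ)}`. -/
def Biadmissible (𝓕 : Filtration ℝ m) (μ : Measure Ω) (T : ℝ)
    (U : (Ω → ℝ) → (Ω → ℝ) → Ω → ℝ) : Prop :=
  (∃ C : ℝ, ∀ ρ ∈ ST 𝓕 T, ∀ τ ∈ ST 𝓕 T, ∀ᵐ ω ∂μ, |U ρ τ ω| ≤ C) ∧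
  (∀ ρ τ : Ω → ℝ, ∀ (hρ : ρ ∈ ST 𝓕 T) (hτ : τ ∈ ST 𝓕 T),
    Measurable[(hρ.1.max hτ.1).measurableSpace] (U ρ τ)) ∧
  (∀ ρ₁ ∈ ST 𝓕 T, ∀ ρ₂ ∈ ST 𝓕 T, ∀ τ₁ ∈ ST 𝓕 T, ∀ τ₂ ∈ ST 𝓕 T,
    ∀ᵐ ω ∂μ, ρ₁ ω = ρ₂ ω → τ₁ ω = τ₂ ω → U ρ₁ τ₁ ω = U ρ₂ τ₂ ω)

/-- Uniform right continuity in expectation along stopping times. -/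
def URCE (𝓕 : Filtration ℝ m) (μ : Measure Ω) (T : ℝ)
    (U : (Ω → ℝ) → (Ω → ℝ) → Ω → ℝ) : Prop :=
  ∀ ρ ∈ ST 𝓕 T, ∀ τ ∈ ST 𝓕 T, ∀ ρs τs : ℕ → Ω → ℝ,
    (∀ n, ρs n ∈ ST 𝓕 T) → (∀ n, τs n ∈ ST 𝓕 T) →
    (∀ᵐ ω ∂μ, Antitone (fun n => ρs n ω) ∧
      Tendsto (fun n => ρs n ω) atTop (nhds (ρ ω))) →
    (∀ᵐ ω ∂μ, Antitone (fun n => τs n ω) ∧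
      Tendsto (fun n => τs n ω) atTop (nhds (τ ω))) →
    Tendsto (fun n => ⨆ ρ' : ST 𝓕 T,
        |(∫ ω, U ρ' τ ω ∂μ) - ∫ ω, U ρ' (τs n) ω ∂μ|) atTop (nhds 0) ∧
    Tendsto (fun n => ⨆ τ' : ST 𝓕 T,
        |(∫ ω, U ρ τ' ω ∂μ) - ∫ ω, U (ρs n) τ' ω ∂μ|) atTop (nhds 0)

/-- `V¹(τ) = essinf_{ρ ∈ 𝒯_τ} E[U(ρ,τ) | ℱ_τ]`, characterized by its defining properties. -/
def IsV1 (𝓕 : Filtration ℝ m) (μ : Measure Ω) (T : ℝ)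
    (U : (Ω → ℝ) → (Ω → ℝ) → Ω → ℝ) (V1 : (Ω → ℝ) → Ω → ℝ) : Prop :=
  ∀ τ : Ω → ℝ, ∀ hτ : τ ∈ ST 𝓕 T,
    StronglyMeasurable[hτ.1.measurableSpace] (V1 τ) ∧
    (∀ ρ ∈ ST 𝓕 T, (∀ᵐ ω ∂μ, τ ω ≤ ρ ω) →
      V1 τ ≤ᵐ[μ] μ[U ρ τ | hτ.1.measurableSpace]) ∧
    (∀ Z : Ω → ℝ,
      (∀ ρ ∈ ST 𝓕 T, (∀ᵐ ω ∂μ, τ ω ≤ ρ ω) →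
        Z ≤ᵐ[μ] μ[U ρ τ | hτ.1.measurableSpace]) →
      Z ≤ᵐ[μ] V1 τ)

/-- `V²(ρ) = esssup_{τ ∈ 𝒯_ρ} E[U(ρ,τ) | ℱ_ρ]`, characterized by its defining properties. -/
def IsV2 (𝓕 : Filtration ℝ m) (μ : Measure Ω) (T : ℝ)
    (U : (Ω → ℝ) → (Ω → ℝ) → Ω → ℝ) (V2 : (Ω → ℝ) → Ω → ℝ) : Prop :=
  ∀ ρ : Ω → ℝ, ∀ hρ : ρ ∈ ST 𝓕 T,
    StronglyMeasurable[hρ.1.measurableSpace] (V2 ρ) ∧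
    (∀ τ ∈ ST 𝓕 T, (∀ᵐ ω ∂μ, ρ ω ≤ τ ω) →
      μ[U ρ τ | hρ.1.measurableSpace] ≤ᵐ[μ] V2 ρ) ∧
    (∀ Z : Ω → ℝ,
      (∀ τ ∈ ST 𝓕 T, (∀ᵐ ω ∂μ, ρ ω ≤ τ ω) →
        μ[U ρ τ | hρ.1.measurableSpace] ≤ᵐ[μ] Z) →
      V2 ρ ≤ᵐ[μ] Z)

/-- `inf_{r ∈ strat} sup_{τ ∈ 𝒯} E[U(r(τ),τ)]`. -/
noncomputable def upperGame (𝓕 : Filtration ℝ m) (μ : Measure Ω) (T : ℝ)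
    (strat : ((Ω → ℝ) → Ω → ℝ) → Prop) (U : (Ω → ℝ) → (Ω → ℝ) → Ω → ℝ) : ℝ :=
  sInf {x | ∃ r, strat r ∧
    x = sSup {y | ∃ τ ∈ ST 𝓕 T, y = ∫ ω, U (r τ) τ ω ∂μ}}

/-- `sup_{r ∈ strat} inf_{ρ ∈ 𝒯} E[U(ρ, r(ρ))]`. -/
noncomputable def lowerGame (𝓕 : Filtration ℝ m) (μ : Measure Ω) (T : ℝ)
    (strat : ((Ω → ℝ) → Ω → ℝ) → Prop) (U : (Ω → ℝ) → (Ω → ℝ) → Ω → ℝ) : ℝ :=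
  sSup {x | ∃ r, strat r ∧
    x = sInf {y | ∃ ρ ∈ ST 𝓕 T, y = ∫ ω, U ρ (r ρ) ω ∂μ}}

/-- `V̅ := inf_ρ sup_τ E[V¹(τ)1_{τ≤ρ} + V²(ρ)1_{τ>ρ}]`. -/
noncomputable def upperV (𝓕 : Filtration ℝ m) (μ : Measure Ω) (T : ℝ)
    (V1 V2 : (Ω → ℝ) → Ω → ℝ) : ℝ :=
  sInf {x | ∃ ρ ∈ ST 𝓕 T,
    x = sSup {y | ∃ τ ∈ ST 𝓕 T,
      y = ∫ ω, (if τ ω ≤ ρ ω then V1 τ ω else V2 ρ ω) ∂μ}}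

/-- `V̲ := sup_τ inf_ρ E[V¹(τ)1_{τ≤ρ} + V²(ρ)1_{τ>ρ}]`. -/
noncomputable def lowerV (𝓕 : Filtration ℝ m) (μ : Measure Ω) (T : ℝ)
    (V1 V2 : (Ω → ℝ) → Ω → ℝ) : ℝ :=
  sSup {x | ∃ τ ∈ ST 𝓕 T,
    x = sInf {y | ∃ ρ ∈ ST 𝓕 T,
      y = ∫ ω, (if τ ω ≤ ρ ω then V1 τ ω else V2 ρ ω) ∂μ}}

/-! ### Auxiliary lemmas -/

attribute [local instance] Classical.propDecidable

section Aux

variable {Ω : Type*} {m : MeasurableSpace Ω} {μ : Measure Ω} [IsProbabilityMeasure μ]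
  {𝓕 : Filtration ℝ m} {T : ℝ} {U : (Ω → ℝ) → (Ω → ℝ) → Ω → ℝ} {C : ℝ}

lemma st_nonneg {σ : Ω → ℝ} (hσ : σ ∈ ST 𝓕 T) (ω : Ω) : 0 ≤ σ ω := (hσ.2 ω).1

lemma st_le_T {σ : Ω → ℝ} (hσ : σ ∈ ST 𝓕 T) (ω : Ω) : σ ω ≤ T := (hσ.2 ω).2

lemma const_mem_ST {c : ℝ} (hc0 : 0 ≤ c) (hcT : c ≤ T) : (fun _ : Ω => c) ∈ ST 𝓕 T :=
  ⟨isStoppingTime_const 𝓕 c, fun _ => ⟨hc0, hcT⟩⟩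

lemma max_mem_ST {σ τ : Ω → ℝ} (hσ : σ ∈ ST 𝓕 T) (hτ : τ ∈ ST 𝓕 T) :
    (fun ω => max (σ ω) (τ ω)) ∈ ST 𝓕 T :=
  ⟨hσ.1.max hτ.1, fun ω => ⟨le_trans (st_nonneg hσ ω) (le_max_left _ _),
    max_le (st_le_T hσ ω) (st_le_T hτ ω)⟩⟩

/-- pasting of stopping times after a common stopping time -/
lemma paste_mem_ST {κ ν₁ ν₂ : Ω → ℝ} (hκ : IsStoppingTime 𝓕 (fun ω => (κ ω : WithTop ℝ))) {B : Set Ω}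
    (hB : MeasurableSet[hκ.measurableSpace] B)
    (h1 : ν₁ ∈ ST 𝓕 T) (h2 : ν₂ ∈ ST 𝓕 T)
    (hκ1 : ∀ ω, κ ω ≤ ν₁ ω) (hκ2 : ∀ ω, κ ω ≤ ν₂ ω) :
    (fun ω => if ω ∈ B then ν₁ ω else ν₂ ω) ∈ ST 𝓕 T := by
  refine ⟨fun t => ?_, fun ω => ?_⟩
  · have hset : {ω | (if ω ∈ B then ν₁ ω else ν₂ ω) ≤ t}
        = ((B ∩ {ω | κ ω ≤ t}) ∩ {ω | ν₁ ω ≤ t}) ∪ ((Bᶜ ∩ {ω | κ ω ≤ t}) ∩ {ω | ν₂ ω ≤ t}) := by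
      ext ω
      by_cases hω : ω ∈ B <;>
        simp only [Set.mem_setOf_eq, Set.mem_union, Set.mem_inter_iff, Set.mem_compl_iff, hω,
          if_true, if_false, true_and, false_and, and_true, not_true, not_false_iff, or_false,
          false_or]
      · exact ⟨fun h => ⟨le_trans (hκ1 ω) h, h⟩, fun h => h.2⟩
      · exact ⟨fun h => ⟨le_trans (hκ2 ω) h, h⟩, fun h => h.2⟩
    simp only [WithTop.coe_le_coe]
    rw [hset]
    have := ((hB.2 t).inter (h1.1 t)).union ((hB.compl.2 t).inter (h2.1 t))
    simpa only [WithTop.coe_le_coe] using this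
  · by_cases hω : ω ∈ B <;> simp only [hω, if_true, if_false]
    exacts [h1.2 ω, h2.2 ω]

lemma U_integrable (hC : ∀ ρ ∈ ST 𝓕 T, ∀ τ ∈ ST 𝓕 T, ∀ᵐ ω ∂μ, |U ρ τ ω| ≤ C)
    (hmeas : ∀ ρ τ : Ω → ℝ, ∀ (hρ : ρ ∈ ST 𝓕 T) (hτ : τ ∈ ST 𝓕 T),
      Measurable[(hρ.1.max hτ.1).measurableSpace] (U ρ τ))
    {ρ τ : Ω → ℝ} (hρ : ρ ∈ ST 𝓕 T) (hτ : τ ∈ ST 𝓕 T) : Integrable (U ρ τ) μ := by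
  have hm : Measurable (U ρ τ) :=
    (hmeas ρ τ hρ hτ).mono (hρ.1.max hτ.1).measurableSpace_le le_rfl
  refine Integrable.mono' (integrable_const C) hm.aestronglyMeasurable ?_
  filter_upwards [hC ρ hρ τ hτ] with ω hω using by simpa using hω

lemma abs_setIntegral_le {f : Ω → ℝ} (hf : Integrable f μ) (hb : ∀ᵐ ω ∂μ, |f ω| ≤ C)
    (s : Set Ω) : |∫ ω in s, f ω ∂μ| ≤ C := by
  have hC0 : 0 ≤ C := by
    obtain ⟨ω, hω⟩ := hb.exists
    exact le_trans (abs_nonneg _) hω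
  have h1 : |∫ ω in s, f ω ∂μ| ≤ ∫ ω in s, |f ω| ∂μ := by
    simpa [Real.norm_eq_abs] using
      norm_integral_le_integral_norm (μ := μ.restrict s) f
  refine h1.trans ?_
  have h2 : ∫ ω in s, |f ω| ∂μ ≤ ∫ _ω in s, C ∂μ := by
    refine integral_mono_ae (hf.abs.restrict) (integrable_const C) ?_
    exact ae_restrict_of_ae hb
  refine h2.trans ?_
  rw [setIntegral_const]
  calc (μ s).toReal * C ≤ 1 * C := by
        refine mul_le_mul_of_nonneg_right ?_ hC0
        exact ENNReal.toReal_le_of_le_ofReal one_pos.le (by simpa using prob_le_one (μ := μ) (s := s))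
    _ = C := one_mul C

lemma abs_integral_U_le (hC : ∀ ρ ∈ ST 𝓕 T, ∀ τ ∈ ST 𝓕 T, ∀ᵐ ω ∂μ, |U ρ τ ω| ≤ C)
    (hmeas : ∀ ρ τ : Ω → ℝ, ∀ (hρ : ρ ∈ ST 𝓕 T) (hτ : τ ∈ ST 𝓕 T),
      Measurable[(hρ.1.max hτ.1).measurableSpace] (U ρ τ))
    {ρ τ : Ω → ℝ} (hρ : ρ ∈ ST 𝓕 T) (hτ : τ ∈ ST 𝓕 T) : |∫ ω, U ρ τ ω ∂μ| ≤ C := by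
  have := abs_setIntegral_le (μ := μ) (U_integrable hC hmeas hρ hτ) (hC ρ hρ τ hτ) Set.univ
  simpa using this

end Aux

section Aux2

variable {Ω : Type*} {m : MeasurableSpace Ω} {μ : Measure Ω} [IsProbabilityMeasure μ]
  {𝓕 : Filtration ℝ m} {T : ℝ} {U : (Ω → ℝ) → (Ω → ℝ) → Ω → ℝ} {C : ℝ}
  {V1 V2 : (Ω → ℝ) → Ω → ℝ}

lemma condexp_abs_le {m' : MeasurableSpace Ω} (hm : m' ≤ m) {f : Ω → ℝ}
    (hf : Integrable f μ) (hb : ∀ᵐ ω ∂μ, |f ω| ≤ C) :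
    ∀ᵐ ω ∂μ, |(μ[f|m']) ω| ≤ C := by
  have h1 : μ[f|m'] ≤ᵐ[μ] μ[fun _ => C|m'] :=
    condExp_mono hf (integrable_const C) (hb.mono fun ω h => (abs_le.1 h).2)
  have h2 : μ[fun _ => (-C)|m'] ≤ᵐ[μ] μ[f|m'] :=
    condExp_mono (integrable_const _) hf (hb.mono fun ω h => (abs_le.1 h).1)
  rw [condExp_const hm] at h1 h2
  filter_upwards [h1, h2] with ω hω1 hω2
  exact abs_le.2 ⟨hω2, hω1⟩

lemma urce_seq (hU' : URCE 𝓕 μ T U) {ρ : Ω → ℝ} (hρ : ρ ∈ ST 𝓕 T)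
    {ρs : ℕ → Ω → ℝ} (hρs : ∀ n, ρs n ∈ ST 𝓕 T)
    (hanti : ∀ ω, Antitone fun n => ρs n ω)
    (htd : ∀ ω, Tendsto (fun n => ρs n ω) atTop (nhds (ρ ω))) :
    Tendsto (fun n => ⨆ τ' : ST 𝓕 T,
      |(∫ ω, U ρ (↑τ') ω ∂μ) - ∫ ω, U (ρs n) (↑τ') ω ∂μ|) atTop (nhds 0) :=
  (hU' ρ hρ ρ hρ ρs (fun _ => ρ) hρs (fun _ => hρ)
    (Filter.Eventually.of_forall fun ω => ⟨hanti ω, htd ω⟩)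
    (Filter.Eventually.of_forall fun ω => ⟨fun _ _ _ => le_rfl, tendsto_const_nhds⟩)).2

lemma urce_bddAbove (hC : ∀ ρ ∈ ST 𝓕 T, ∀ τ ∈ ST 𝓕 T, ∀ᵐ ω ∂μ, |U ρ τ ω| ≤ C)
    (hmeas : ∀ ρ τ : Ω → ℝ, ∀ (hρ : ρ ∈ ST 𝓕 T) (hτ : τ ∈ ST 𝓕 T),
      Measurable[(hρ.1.max hτ.1).measurableSpace] (U ρ τ))
    {ν₁ ν₂ : Ω → ℝ} (h1 : ν₁ ∈ ST 𝓕 T) (h2 : ν₂ ∈ ST 𝓕 T) :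
    BddAbove (Set.range fun τ' : ST 𝓕 T =>
      |(∫ ω, U ν₁ (↑τ') ω ∂μ) - ∫ ω, U ν₂ (↑τ') ω ∂μ|) := by
  refine ⟨C + C, ?_⟩
  rintro x ⟨τ', rfl⟩
  refine (abs_sub _ _).trans ?_
  exact add_le_add (abs_integral_U_le hC hmeas h1 τ'.2) (abs_integral_U_le hC hmeas h2 τ'.2)

lemma V1_abs_le (hT : 0 < T)
    (hC : ∀ ρ ∈ ST 𝓕 T, ∀ τ ∈ ST 𝓕 T, ∀ᵐ ω ∂μ, |U ρ τ ω| ≤ C)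
    (hmeas : ∀ ρ τ : Ω → ℝ, ∀ (hρ : ρ ∈ ST 𝓕 T) (hτ : τ ∈ ST 𝓕 T),
      Measurable[(hρ.1.max hτ.1).measurableSpace] (U ρ τ))
    (hV1 : IsV1 𝓕 μ T U V1) {τ : Ω → ℝ} (hτ : τ ∈ ST 𝓕 T) :
    ∀ᵐ ω ∂μ, |V1 τ ω| ≤ C := by
  have hTm : (fun _ : Ω => T) ∈ ST 𝓕 T := const_mem_ST hT.le le_rfl
  have hup : V1 τ ≤ᵐ[μ] μ[U (fun _ => T) τ|hτ.1.measurableSpace] :=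
    (hV1 τ hτ).2.1 _ hTm (Filter.Eventually.of_forall fun ω => st_le_T hτ ω)
  have hupC : ∀ᵐ ω ∂μ, |(μ[U (fun _ => T) τ|hτ.1.measurableSpace]) ω| ≤ C :=
    condexp_abs_le hτ.1.measurableSpace_le (U_integrable hC hmeas hTm hτ) (hC _ hTm _ hτ)
  have hlow : (fun _ : Ω => -C) ≤ᵐ[μ] V1 τ := by
    refine (hV1 τ hτ).2.2 _ fun ρ' hρ' _ => ?_
    have := condExp_mono (μ := μ) (m := hτ.1.measurableSpace)
      (integrable_const (-C)) (U_integrable hC hmeas hρ' hτ)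
      ((hC ρ' hρ' τ hτ).mono fun ω h => (abs_le.1 h).1)
    rwa [condExp_const hτ.1.measurableSpace_le] at this
  filter_upwards [hup, hupC, hlow] with ω h1 h2 h3
  exact abs_le.2 ⟨h3, h1.trans (abs_le.1 h2).2⟩

lemma V2_abs_le (hT : 0 < T)
    (hC : ∀ ρ ∈ ST 𝓕 T, ∀ τ ∈ ST 𝓕 T, ∀ᵐ ω ∂μ, |U ρ τ ω| ≤ C)
    (hmeas : ∀ ρ τ : Ω → ℝ, ∀ (hρ : ρ ∈ ST 𝓕 T) (hτ : τ ∈ ST 𝓕 T),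
      Measurable[(hρ.1.max hτ.1).measurableSpace] (U ρ τ))
    (hV2 : IsV2 𝓕 μ T U V2) {ρ : Ω → ℝ} (hρ : ρ ∈ ST 𝓕 T) :
    ∀ᵐ ω ∂μ, |V2 ρ ω| ≤ C := by
  have hTm : (fun _ : Ω => T) ∈ ST 𝓕 T := const_mem_ST hT.le le_rfl
  have hlow : μ[U ρ (fun _ => T)|hρ.1.measurableSpace] ≤ᵐ[μ] V2 ρ :=
    (hV2 ρ hρ).2.1 _ hTm (Filter.Eventually.of_forall fun ω => st_le_T hρ ω)
  have hlowC : ∀ᵐ ω ∂μ, |(μ[U ρ (fun _ => T)|hρ.1.measurableSpace]) ω| ≤ C :=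
    condexp_abs_le hρ.1.measurableSpace_le (U_integrable hC hmeas hρ hTm) (hC _ hρ _ hTm)
  have hup : V2 ρ ≤ᵐ[μ] (fun _ : Ω => C) := by
    refine (hV2 ρ hρ).2.2 _ fun τ' hτ' _ => ?_
    have := condExp_mono (μ := μ) (m := hρ.1.measurableSpace)
      (U_integrable hC hmeas hρ hτ') (integrable_const C)
      ((hC ρ hρ τ' hτ').mono fun ω h => (abs_le.1 h).2)
    rwa [condExp_const hρ.1.measurableSpace_le] at this
  filter_upwards [hlow, hlowC, hup] with ω h1 h2 h3
  exact abs_le.2 ⟨(abs_le.1 h2).1.trans h1, h3⟩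

lemma V1_integrable (hT : 0 < T)
    (hC : ∀ ρ ∈ ST 𝓕 T, ∀ τ ∈ ST 𝓕 T, ∀ᵐ ω ∂μ, |U ρ τ ω| ≤ C)
    (hmeas : ∀ ρ τ : Ω → ℝ, ∀ (hρ : ρ ∈ ST 𝓕 T) (hτ : τ ∈ ST 𝓕 T),
      Measurable[(hρ.1.max hτ.1).measurableSpace] (U ρ τ))
    (hV1 : IsV1 𝓕 μ T U V1) {τ : Ω → ℝ} (hτ : τ ∈ ST 𝓕 T) :
    Integrable (V1 τ) μ := by
  refine Integrable.mono' (integrable_const C)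
    (((hV1 τ hτ).1.mono hτ.1.measurableSpace_le).aestronglyMeasurable) ?_
  simpa using V1_abs_le hT hC hmeas hV1 hτ

lemma V2_integrable (hT : 0 < T)
    (hC : ∀ ρ ∈ ST 𝓕 T, ∀ τ ∈ ST 𝓕 T, ∀ᵐ ω ∂μ, |U ρ τ ω| ≤ C)
    (hmeas : ∀ ρ τ : Ω → ℝ, ∀ (hρ : ρ ∈ ST 𝓕 T) (hτ : τ ∈ ST 𝓕 T),
      Measurable[(hρ.1.max hτ.1).measurableSpace] (U ρ τ))
    (hV2 : IsV2 𝓕 μ T U V2) {ρ : Ω → ℝ} (hρ : ρ ∈ ST 𝓕 T) :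
    Integrable (V2 ρ) μ := by
  refine Integrable.mono' (integrable_const C)
    (((hV2 ρ hρ).1.mono hρ.1.measurableSpace_le).aestronglyMeasurable) ?_
  simpa using V2_abs_le hT hC hmeas hV2 hρ

end Aux2

section Eta

variable {Ω : Type*} {m : MeasurableSpace Ω} {μ : Measure Ω} [IsProbabilityMeasure μ]
  {𝓕 : Filtration ℝ m} {T : ℝ} {U : (Ω → ℝ) → (Ω → ℝ) → Ω → ℝ} {C : ℝ}

/-- the set of `ω` whose least index `j ≥ k` with `ω ∈ D j` equals `j` -/
def idxSet (D : ℕ → Set Ω) (k j : ℕ) : Set Ω :=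
  if k ≤ j then D j ∩ (⋂ i ∈ Set.Ico k j, (D i)ᶜ) else ∅

lemma mem_idxSet_iff {D : ℕ → Set Ω} {k j : ℕ} {ω : Ω} :
    ω ∈ idxSet D k j ↔ (k ≤ j ∧ ω ∈ D j ∧ ∀ i, k ≤ i → i < j → ω ∉ D i) := by
  unfold idxSet
  by_cases h : k ≤ j
  · simp only [h, if_true, Set.mem_inter_iff, Set.mem_iInter, Set.mem_compl_iff, Set.mem_Ico,
      true_and]
    constructor
    · exact fun ⟨h1, h2⟩ => ⟨h1, fun i hki hij => h2 i ⟨hki, hij⟩⟩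
    · exact fun ⟨h1, h2⟩ => ⟨h1, fun i hi => h2 i hi.1 hi.2⟩
  · simp [h]

lemma idxSet_self (D : ℕ → Set Ω) (k : ℕ) : idxSet D k k = D k := by
  ext ω; rw [mem_idxSet_iff]
  exact ⟨fun h => h.2.1, fun h => ⟨le_rfl, h, fun i h1 h2 => absurd (h1.trans_lt h2) (lt_irrefl k)⟩⟩

lemma idxSet_subset (D : ℕ → Set Ω) (k j : ℕ) : idxSet D k j ⊆ D j :=
  fun _ hω => (mem_idxSet_iff.1 hω).2.1

lemma idxSet_measurable {m' : MeasurableSpace Ω} {D : ℕ → Set Ω}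
    (hD : ∀ j, MeasurableSet[m'] (D j)) (k j : ℕ) : MeasurableSet[m'] (idxSet D k j) := by
  unfold idxSet
  by_cases h : k ≤ j
  · simp only [h, if_true]
    exact (hD j).inter (MeasurableSet.biInter (Set.to_countable _) fun i _ => (hD i).compl)
  · simp only [h, if_false]; exact MeasurableSet.empty

/-- the stopping time which jumps to `ρs j` on `idxSet D k j` and stays at `ρ` otherwise -/
noncomputable def etaSeq (ρ : Ω → ℝ) (ρs : ℕ → Ω → ℝ) (D : ℕ → Set Ω) (k : ℕ) (ω : Ω) : ℝ :=
  if h : ∃ j, k ≤ j ∧ ω ∈ D j then ρs (Nat.find h) ω else ρ ω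

lemma etaSeq_eq_of_mem_idx {ρ : Ω → ℝ} {ρs : ℕ → Ω → ℝ} {D : ℕ → Set Ω} {k j : ℕ} {ω : Ω}
    (hm : ω ∈ idxSet D k j) : etaSeq ρ ρs D k ω = ρs j ω := by
  rw [mem_idxSet_iff] at hm
  have hex : ∃ j', k ≤ j' ∧ ω ∈ D j' := ⟨j, hm.1, hm.2.1⟩
  have hfind : Nat.find hex = j := by
    rw [Nat.find_eq_iff]
    exact ⟨⟨hm.1, hm.2.1⟩, fun i hi hc => hm.2.2 i hc.1 hi hc.2⟩
  rw [etaSeq, dif_pos hex, hfind]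

lemma mem_idxSet_find {D : ℕ → Set Ω} {k : ℕ} {ω : Ω} (hex : ∃ j, k ≤ j ∧ ω ∈ D j) :
    ω ∈ idxSet D k (Nat.find hex) := by
  rw [mem_idxSet_iff]
  exact ⟨(Nat.find_spec hex).1, (Nat.find_spec hex).2,
    fun i h1 h2 => fun hDi => Nat.find_min hex h2 ⟨h1, hDi⟩⟩

lemma etaSeq_eq_of_not {ρ : Ω → ℝ} {ρs : ℕ → Ω → ℝ} {D : ℕ → Set Ω} {k : ℕ} {ω : Ω}
    (h : ∀ j, k ≤ j → ω ∉ D j) : etaSeq ρ ρs D k ω = ρ ω := by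
  rw [etaSeq, dif_neg]
  rintro ⟨j, hj, hDj⟩; exact h j hj hDj

lemma idxSet_pairwise_disjoint (D : ℕ → Set Ω) (k : ℕ) :
    Pairwise (Function.onFun Disjoint fun j => idxSet D k j) := by
  intro j₁ j₂ hne
  refine Set.disjoint_left.2 fun ω h1 h2 => ?_
  rw [mem_idxSet_iff] at h1 h2
  rcases lt_or_gt_of_ne hne with h | h
  · exact h2.2.2 j₁ h1.1 h h1.2.1
  · exact h1.2.2 j₂ h2.1 h h2.2.1

lemma etaSeq_ge {ρ : Ω → ℝ} {ρs : ℕ → Ω → ℝ} {D : ℕ → Set Ω} {k : ℕ}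
    (hge : ∀ n ω, ρ ω ≤ ρs n ω) (ω : Ω) : ρ ω ≤ etaSeq ρ ρs D k ω := by
  rw [etaSeq]
  by_cases h : ∃ j, k ≤ j ∧ ω ∈ D j
  · rw [dif_pos h]; exact hge _ ω
  · rw [dif_neg h]

lemma etaSeq_le {ρ : Ω → ℝ} {ρs : ℕ → Ω → ℝ} {D : ℕ → Set Ω} {k : ℕ}
    (hge : ∀ n ω, ρ ω ≤ ρs n ω) (hanti : ∀ ω, Antitone fun n => ρs n ω) (ω : Ω) :
    etaSeq ρ ρs D k ω ≤ ρs k ω := by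
  rw [etaSeq]
  by_cases h : ∃ j, k ≤ j ∧ ω ∈ D j
  · rw [dif_pos h]; exact hanti ω (Nat.find_spec h).1
  · rw [dif_neg h]; exact hge k ω

lemma etaSeq_mem_ST {ρ : Ω → ℝ} {ρs : ℕ → Ω → ℝ} {D : ℕ → Set Ω}
    (hρ : ρ ∈ ST 𝓕 T) (hρs : ∀ n, ρs n ∈ ST 𝓕 T) (hge : ∀ n ω, ρ ω ≤ ρs n ω)
    (hD : ∀ j, MeasurableSet[hρ.1.measurableSpace] (D j)) (k : ℕ) :
    etaSeq ρ ρs D k ∈ ST 𝓕 T := by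
  constructor
  · intro t
    have hset : {ω | etaSeq ρ ρs D k ω ≤ t}
        = (⋃ j, idxSet D k j ∩ {ω | ρs j ω ≤ t})
          ∪ ((⋂ j, {ω | k ≤ j → ω ∉ D j}) ∩ {ω | ρ ω ≤ t}) := by
      ext ω
      simp only [Set.mem_setOf_eq, Set.mem_union, Set.mem_iUnion, Set.mem_inter_iff,
        Set.mem_iInter]
      by_cases h : ∃ j, k ≤ j ∧ ω ∈ D j
      · have hmem := mem_idxSet_find h
        have heq : etaSeq ρ ρs D k ω = ρs (Nat.find h) ω := etaSeq_eq_of_mem_idx hmem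
        rw [heq]
        constructor
        · exact fun hle => Or.inl ⟨Nat.find h, hmem, hle⟩
        · rintro (⟨j, hj, hle⟩ | ⟨hall, _⟩)
          · have : etaSeq ρ ρs D k ω = ρs j ω := etaSeq_eq_of_mem_idx hj
            rw [heq] at this; rw [this]; exact hle
          · exact absurd h (by push_neg; exact fun j hj => hall j hj)
      · have heq : etaSeq ρ ρs D k ω = ρ ω := etaSeq_eq_of_not (by push_neg at h; exact h)
        rw [heq]
        constructor
        · exact fun hle => Or.inr ⟨fun j hj hDj => absurd ⟨j, hj, hDj⟩ h, hle⟩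
        · rintro (⟨j, hj, hle⟩ | ⟨_, hle⟩)
          · exact absurd ⟨j, (mem_idxSet_iff.1 hj).1, (mem_idxSet_iff.1 hj).2.1⟩ h
          · exact hle
    simp only [WithTop.coe_le_coe]
    rw [hset]
    have hmeasρ : ∀ (S : Set Ω), MeasurableSet[hρ.1.measurableSpace] S →
        MeasurableSet[𝓕 t] (S ∩ {ω | ρ ω ≤ t}) := by
      intro S hS
      rw [IsStoppingTime.measurableSet] at hS
      simpa only [WithTop.coe_le_coe] using hS.2 t
    refine MeasurableSet.union (MeasurableSet.iUnion fun j => ?_) ?_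
    · have h1 : idxSet D k j ∩ {ω | ρs j ω ≤ t}
          = (idxSet D k j ∩ {ω | ρ ω ≤ t}) ∩ {ω | ρs j ω ≤ t} := by
        ext ω
        simp only [Set.mem_inter_iff, Set.mem_setOf_eq, and_assoc]
        exact ⟨fun ⟨a, b⟩ => ⟨a, le_trans (hge j ω) b, b⟩, fun ⟨a, _, c⟩ => ⟨a, c⟩⟩
      rw [h1]
      simpa only [WithTop.coe_le_coe] using (hmeasρ _ (idxSet_measurable hD k j)).inter ((hρs j).1 t)
    · refine hmeasρ _ ?_
      refine MeasurableSet.iInter fun j => ?_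
      by_cases hkj : k ≤ j
      · have : {ω : Ω | k ≤ j → ω ∉ D j} = (D j)ᶜ := by ext ω; simp [hkj]
        rw [this]; exact (hD j).compl
      · have : {ω : Ω | k ≤ j → ω ∉ D j} = Set.univ := by ext ω; simp [hkj]
        rw [this]; exact MeasurableSet.univ
  · intro ω
    rw [etaSeq]
    by_cases h : ∃ j, k ≤ j ∧ ω ∈ D j
    · rw [dif_pos h]; exact (hρs _).2 ω
    · rw [dif_neg h]; exact hρ.2 ω

lemma etaSeq_antitone {ρ : Ω → ℝ} {ρs : ℕ → Ω → ℝ} {D : ℕ → Set Ω}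
    (hge : ∀ n ω, ρ ω ≤ ρs n ω) (hanti : ∀ ω, Antitone fun n => ρs n ω) (ω : Ω) :
    Antitone fun k => etaSeq ρ ρs D k ω := by
  refine antitone_nat_of_succ_le fun k => ?_
  by_cases h : ∃ j, k + 1 ≤ j ∧ ω ∈ D j
  · have h' : ∃ j, k ≤ j ∧ ω ∈ D j := ⟨Nat.find h, le_trans (Nat.le_succ k) (Nat.find_spec h).1,
      (Nat.find_spec h).2⟩
    have e1 : etaSeq ρ ρs D (k + 1) ω = ρs (Nat.find h) ω := by rw [etaSeq, dif_pos h]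
    have e2 : etaSeq ρ ρs D k ω = ρs (Nat.find h') ω := by rw [etaSeq, dif_pos h']
    rw [e1, e2]
    exact hanti ω (Nat.find_min' h'
      ⟨le_trans (Nat.le_succ k) (Nat.find_spec h).1, (Nat.find_spec h).2⟩)
  · have e1 : etaSeq ρ ρs D (k + 1) ω = ρ ω := by rw [etaSeq, dif_neg h]
    rw [e1]
    exact etaSeq_ge hge ω

end Eta

section Eta2

variable {Ω : Type*} {m : MeasurableSpace Ω} {μ : Measure Ω} [IsProbabilityMeasure μ]
  {𝓕 : Filtration ℝ m} {T : ℝ} {U : (Ω → ℝ) → (Ω → ℝ) → Ω → ℝ} {C : ℝ}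

lemma etaSeq_tendsto {ρ : Ω → ℝ} {ρs : ℕ → Ω → ℝ} {D : ℕ → Set Ω}
    (hge : ∀ n ω, ρ ω ≤ ρs n ω) (hanti : ∀ ω, Antitone fun n => ρs n ω)
    (htd : ∀ ω, Tendsto (fun n => ρs n ω) atTop (nhds (ρ ω))) (ω : Ω) :
    Tendsto (fun k => etaSeq ρ ρs D k ω) atTop (nhds (ρ ω)) :=
  tendsto_of_tendsto_of_tendsto_of_le_of_le tendsto_const_nhds (htd ω)
    (fun _ => etaSeq_ge hge ω) (fun _ => etaSeq_le hge hanti ω)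

lemma eta_hasSum
    (hC : ∀ ρ ∈ ST 𝓕 T, ∀ τ ∈ ST 𝓕 T, ∀ᵐ ω ∂μ, |U ρ τ ω| ≤ C)
    (hmeas : ∀ ρ τ : Ω → ℝ, ∀ (hρ : ρ ∈ ST 𝓕 T) (hτ : τ ∈ ST 𝓕 T),
      Measurable[(hρ.1.max hτ.1).measurableSpace] (U ρ τ))
    (hloc : ∀ ρ₁ ∈ ST 𝓕 T, ∀ ρ₂ ∈ ST 𝓕 T, ∀ τ₁ ∈ ST 𝓕 T, ∀ τ₂ ∈ ST 𝓕 T,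
      ∀ᵐ ω ∂μ, ρ₁ ω = ρ₂ ω → τ₁ ω = τ₂ ω → U ρ₁ τ₁ ω = U ρ₂ τ₂ ω)
    {ρ : Ω → ℝ} {ρs : ℕ → Ω → ℝ} {D : ℕ → Set Ω}
    (hρ : ρ ∈ ST 𝓕 T) (hρs : ∀ n, ρs n ∈ ST 𝓕 T) (hge : ∀ n ω, ρ ω ≤ ρs n ω)
    (hD : ∀ j, MeasurableSet[hρ.1.measurableSpace] (D j)) (k : ℕ) :
    HasSum (fun j => ∫ ω in idxSet D k j, (U (ρs j) ρ ω - U ρ ρ ω) ∂μ)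
      ((∫ ω, U (etaSeq ρ ρs D k) ρ ω ∂μ) - ∫ ω, U ρ ρ ω ∂μ) := by
  have hη : etaSeq ρ ρs D k ∈ ST 𝓕 T := etaSeq_mem_ST hρ hρs hge hD k
  set f := fun ω => U (etaSeq ρ ρs D k) ρ ω - U ρ ρ ω with hf
  have hfint : Integrable f μ :=
    (U_integrable hC hmeas hη hρ).sub (U_integrable hC hmeas hρ hρ)
  have hAm : ∀ j, MeasurableSet (idxSet D k j) :=
    fun j => hρ.1.measurableSpace_le _ (idxSet_measurable hD k j)
  have h1 : HasSum (fun j => ∫ ω in idxSet D k j, f ω ∂μ)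
      (∫ ω in ⋃ j, idxSet D k j, f ω ∂μ) :=
    hasSum_integral_iUnion hAm (idxSet_pairwise_disjoint D k) hfint.integrableOn
  -- identify the union
  set N := {ω : Ω | ∀ j, k ≤ j → ω ∉ D j} with hN
  have hUN : (⋃ j, idxSet D k j) = Nᶜ := by
    ext ω
    simp only [Set.mem_iUnion, Set.mem_compl_iff, hN, Set.mem_setOf_eq]
    constructor
    · rintro ⟨j, hj⟩ hcon
      exact hcon j (mem_idxSet_iff.1 hj).1 (mem_idxSet_iff.1 hj).2.1
    · intro hcon
      push_neg at hcon
      obtain ⟨j, hj1, hj2⟩ := hcon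
      exact ⟨_, mem_idxSet_find ⟨j, hj1, hj2⟩⟩
  have hNm : MeasurableSet N := by
    have h := MeasurableSet.iUnion hAm
    rw [hUN] at h
    exact h.of_compl
  have hNzero : ∫ ω in N, f ω ∂μ = 0 := by
    have hae : ∀ᵐ ω ∂μ, ω ∈ N → f ω = 0 := by
      filter_upwards [hloc _ hη _ hρ _ hρ _ hρ] with ω hω hmem
      have : etaSeq ρ ρs D k ω = ρ ω := etaSeq_eq_of_not hmem
      simp only [hf, hω this rfl, sub_self]
    rw [setIntegral_congr_ae hNm hae]
    simp
  have hval : ∫ ω in ⋃ j, idxSet D k j, f ω ∂μ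
      = (∫ ω, U (etaSeq ρ ρs D k) ρ ω ∂μ) - ∫ ω, U ρ ρ ω ∂μ := by
    have := integral_add_compl hNm hfint
    rw [hUN]
    have hfull : ∫ ω, f ω ∂μ = (∫ ω, U (etaSeq ρ ρs D k) ρ ω ∂μ) - ∫ ω, U ρ ρ ω ∂μ :=
      integral_sub (U_integrable hC hmeas hη hρ) (U_integrable hC hmeas hρ hρ)
    rw [hNzero] at this
    rw [← hfull, ← this, zero_add]
  rw [hval] at h1
  refine h1.congr_fun fun j => ?_
  refine setIntegral_congr_ae (hAm j) ?_
  filter_upwards [hloc _ hη _ (hρs j) _ hρ _ hρ] with ω hω hmem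
  show U (ρs j) ρ ω - U ρ ρ ω = U (etaSeq ρ ρs D k) ρ ω - U ρ ρ ω
  rw [hω (etaSeq_eq_of_mem_idx hmem) rfl]

lemma setIntegral_le_pos_set {g : Ω → ℝ} (hg : Integrable g μ) {P B : Set Ω}
    (hP : MeasurableSet P) (hB : MeasurableSet B) (hpos : ∀ ω ∈ P, 0 ≤ g ω)
    (hneg : ∀ ω ∉ P, g ω ≤ 0) :
    ∫ ω in B, g ω ∂μ ≤ ∫ ω in P, g ω ∂μ := by
  have h1 : (∫ ω in B ∩ P, g ω ∂μ) + ∫ ω in B \ P, g ω ∂μ = ∫ ω in B, g ω ∂μ :=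
    integral_inter_add_diff hP hg.integrableOn
  have h2 : (∫ ω in P ∩ B, g ω ∂μ) + ∫ ω in P \ B, g ω ∂μ = ∫ ω in P, g ω ∂μ :=
    integral_inter_add_diff hB hg.integrableOn
  have h3 : ∫ ω in B \ P, g ω ∂μ ≤ 0 :=
    setIntegral_nonpos (hB.diff hP) fun ω hω => hneg ω hω.2
  have h4 : 0 ≤ ∫ ω in P \ B, g ω ∂μ :=
    setIntegral_nonneg (hP.diff hB) fun ω hω => hpos ω hω.1
  have h5 : B ∩ P = P ∩ B := Set.inter_comm _ _
  rw [← h1, ← h2, h5]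
  linarith

lemma claimA
    (hC : ∀ ρ ∈ ST 𝓕 T, ∀ τ ∈ ST 𝓕 T, ∀ᵐ ω ∂μ, |U ρ τ ω| ≤ C)
    (hmeas : ∀ ρ τ : Ω → ℝ, ∀ (hρ : ρ ∈ ST 𝓕 T) (hτ : τ ∈ ST 𝓕 T),
      Measurable[(hρ.1.max hτ.1).measurableSpace] (U ρ τ))
    (hloc : ∀ ρ₁ ∈ ST 𝓕 T, ∀ ρ₂ ∈ ST 𝓕 T, ∀ τ₁ ∈ ST 𝓕 T, ∀ τ₂ ∈ ST 𝓕 T,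
      ∀ᵐ ω ∂μ, ρ₁ ω = ρ₂ ω → τ₁ ω = τ₂ ω → U ρ₁ τ₁ ω = U ρ₂ τ₂ ω)
    (hU' : URCE 𝓕 μ T U)
    {ρ : Ω → ℝ} {ρs : ℕ → Ω → ℝ}
    (hρ : ρ ∈ ST 𝓕 T) (hρs : ∀ n, ρs n ∈ ST 𝓕 T) (hge : ∀ n ω, ρ ω ≤ ρs n ω)
    (hanti : ∀ ω, Antitone fun n => ρs n ω)
    (htd : ∀ ω, Tendsto (fun n => ρs n ω) atTop (nhds (ρ ω))) :
    ∀ ε > (0 : ℝ), ∃ n : ℕ,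
      (∀ τ' : Ω → ℝ, ∀ _hτ' : τ' ∈ ST 𝓕 T,
        |(∫ ω, U ρ τ' ω ∂μ) - ∫ ω, U (ρs n) τ' ω ∂μ| ≤ ε) ∧
      (∀ B : Set Ω, MeasurableSet[hρ.1.measurableSpace] B →
        |∫ ω in B, (U (ρs n) ρ ω - U ρ ρ ω) ∂μ| ≤ ε) := by
  intro ε hε
  have hle := hρ.1.measurableSpace_le
  set G := fun n => fun ω => U (ρs n) ρ ω - U ρ ρ ω with hG
  have hGint : ∀ n, Integrable (G n) μ :=
    fun n => (U_integrable hC hmeas (hρs n) hρ).sub (U_integrable hC hmeas hρ hρ)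
  set g := fun n => μ[G n | hρ.1.measurableSpace] with hg
  have hgint : ∀ n, Integrable (g n) μ := fun n => integrable_condExp
  set Dp := fun n => {ω | 0 < g n ω} with hDp
  set Dm := fun n => {ω | g n ω < 0} with hDm
  have hDpm : ∀ n, MeasurableSet[hρ.1.measurableSpace] (Dp n) := fun n =>
    stronglyMeasurable_const.measurableSet_lt stronglyMeasurable_condExp
  have hDmm : ∀ n, MeasurableSet[hρ.1.measurableSpace] (Dm n) := fun n =>
    stronglyMeasurable_condExp.measurableSet_lt stronglyMeasurable_const
  have hBg : ∀ n (B : Set Ω), MeasurableSet[hρ.1.measurableSpace] B →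
      ∫ ω in B, G n ω ∂μ = ∫ ω in B, g n ω ∂μ :=
    fun n B hB => (setIntegral_condExp hle (hGint n) hB).symm
  -- three convergent error sequences
  have hwmain := urce_seq hU' hρ hρs hanti htd
  have hηp : ∀ k, etaSeq ρ ρs Dp k ∈ ST 𝓕 T := etaSeq_mem_ST hρ hρs hge hDpm
  have hηm : ∀ k, etaSeq ρ ρs Dm k ∈ ST 𝓕 T := etaSeq_mem_ST hρ hρs hge hDmm
  have hwp := urce_seq hU' hρ hηp (etaSeq_antitone hge hanti) (etaSeq_tendsto hge hanti htd)
  have hwm := urce_seq hU' hρ hηm (etaSeq_antitone hge hanti) (etaSeq_tendsto hge hanti htd)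
  have hev : ∀ᶠ n in atTop,
      (⨆ τ' : ST 𝓕 T, |(∫ ω, U ρ (↑τ') ω ∂μ) - ∫ ω, U (ρs n) (↑τ') ω ∂μ|) < ε ∧
      (⨆ τ' : ST 𝓕 T, |(∫ ω, U ρ (↑τ') ω ∂μ) - ∫ ω, U (etaSeq ρ ρs Dp n) (↑τ') ω ∂μ|) < ε ∧
      (⨆ τ' : ST 𝓕 T, |(∫ ω, U ρ (↑τ') ω ∂μ) - ∫ ω, U (etaSeq ρ ρs Dm n) (↑τ') ω ∂μ|) < ε :=
    ((hwmain.eventually (gt_mem_nhds hε)).and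
      ((hwp.eventually (gt_mem_nhds hε)).and (hwm.eventually (gt_mem_nhds hε))))
  obtain ⟨n, hn1, hn2, hn3⟩ := hev.exists
  refine ⟨n, fun τ' hτ' => ?_, fun B hB => ?_⟩
  · refine le_trans (le_ciSup (urce_bddAbove hC hmeas hρ (hρs n)) ⟨τ', hτ'⟩) hn1.le
  -- the set bound
  · have hupper : ∫ ω in Dp n, g n ω ∂μ ≤ ε := by
      have hsum := eta_hasSum hC hmeas hloc hρ hρs hge hDpm n
      have hterm : ∀ j, 0 ≤ ∫ ω in idxSet Dp n j, (U (ρs j) ρ ω - U ρ ρ ω) ∂μ := by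
        intro j
        rw [hBg j _ (idxSet_measurable hDpm n j)]
        refine setIntegral_nonneg (hle _ (idxSet_measurable hDpm n j)) fun ω hω => ?_
        exact le_of_lt (idxSet_subset Dp n j hω)
      have hfst : (∫ ω in idxSet Dp n n, (U (ρs n) ρ ω - U ρ ρ ω) ∂μ)
          ≤ (∫ ω, U (etaSeq ρ ρs Dp n) ρ ω ∂μ) - ∫ ω, U ρ ρ ω ∂μ :=
        le_hasSum hsum n fun j _ => hterm j
      rw [idxSet_self, hBg n _ (hDpm n)] at hfst
      refine hfst.trans ?_
      have habs : (∫ ω, U (etaSeq ρ ρs Dp n) ρ ω ∂μ) - ∫ ω, U ρ ρ ω ∂μ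
          ≤ |(∫ ω, U ρ ρ ω ∂μ) - ∫ ω, U (etaSeq ρ ρs Dp n) ρ ω ∂μ| := by
        rw [abs_sub_comm]
        exact le_abs_self _
      refine habs.trans (le_trans ?_ hn2.le)
      exact le_ciSup (urce_bddAbove hC hmeas hρ (hηp n)) ⟨ρ, hρ⟩
    have hlower : -ε ≤ ∫ ω in Dm n, g n ω ∂μ := by
      have hsum := eta_hasSum hC hmeas hloc hρ hρs hge hDmm n
      have hterm : ∀ j, (∫ ω in idxSet Dm n j, (U (ρs j) ρ ω - U ρ ρ ω) ∂μ) ≤ 0 := by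
        intro j
        rw [hBg j _ (idxSet_measurable hDmm n j)]
        refine setIntegral_nonpos (hle _ (idxSet_measurable hDmm n j)) fun ω hω => ?_
        exact le_of_lt (idxSet_subset Dm n j hω)
      have hfst : (∫ ω, U (etaSeq ρ ρs Dm n) ρ ω ∂μ) - (∫ ω, U ρ ρ ω ∂μ)
          ≤ ∫ ω in idxSet Dm n n, (U (ρs n) ρ ω - U ρ ρ ω) ∂μ := by
        have h' := le_hasSum hsum.neg n fun j _ => neg_nonneg.2 (hterm j)
        exact neg_le_neg_iff.1 h'
      rw [idxSet_self, hBg n _ (hDmm n)] at hfst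
      refine le_trans ?_ hfst
      have habs : -|(∫ ω, U ρ ρ ω ∂μ) - ∫ ω, U (etaSeq ρ ρs Dm n) ρ ω ∂μ|
          ≤ (∫ ω, U (etaSeq ρ ρs Dm n) ρ ω ∂μ) - ∫ ω, U ρ ρ ω ∂μ := by
        rw [abs_sub_comm]
        exact neg_abs_le _
      refine le_trans (neg_le_neg ?_) habs
      refine le_trans ?_ hn3.le
      exact le_ciSup (urce_bddAbove hC hmeas hρ (hηm n)) ⟨ρ, hρ⟩
    rw [hBg n B hB]
    refine abs_le.2 ⟨?_, ?_⟩
    · refine le_trans hlower ?_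
      have := setIntegral_le_pos_set (μ := μ) (g := fun ω => -(g n ω)) (hgint n).neg
        (hle _ (hDmm n)) (hle _ hB)
        (fun ω hω => neg_nonneg.2 (le_of_lt hω)) (fun ω hω => by
          simp only [neg_nonpos]
          exact not_lt.1 hω)
      rw [integral_neg, integral_neg] at this
      linarith
    · refine le_trans (setIntegral_le_pos_set (hgint n) (hle _ (hDpm n)) (hle _ hB)
        (fun ω hω => le_of_lt hω) (fun ω hω => not_lt.1 hω)) hupper

end Eta2

section Prep

variable {Ω : Type*} {m : MeasurableSpace Ω} {μ : Measure Ω} [IsProbabilityMeasure μ]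
  {𝓕 : Filtration ℝ m} {T : ℝ} {U : (Ω → ℝ) → (Ω → ℝ) → Ω → ℝ} {C : ℝ}
  {V1 V2 : (Ω → ℝ) → Ω → ℝ}

lemma seq_to_rho_mem (hT : 0 < T) {ρ : Ω → ℝ} (hρ : ρ ∈ ST 𝓕 T) (n : ℕ) :
    (fun ω => min (ρ ω + ((n : ℝ) + 1)⁻¹) T) ∈ ST 𝓕 T := by
  refine ⟨(hρ.1.add_const (by positivity)).min_const T, fun ω => ?_⟩
  constructor
  · exact le_min (le_trans (st_nonneg hρ ω) (le_add_of_nonneg_right (by positivity))) hT.le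
  · exact min_le_right _ _

lemma seq_to_rho_ge {ρ : Ω → ℝ} (hρ : ρ ∈ ST 𝓕 T) (n : ℕ) (ω : Ω) :
    ρ ω ≤ min (ρ ω + ((n : ℝ) + 1)⁻¹) T :=
  le_min (le_add_of_nonneg_right (by positivity)) (st_le_T hρ ω)

lemma seq_to_rho_anti {ρ : Ω → ℝ} (ω : Ω) :
    Antitone fun n : ℕ => min (ρ ω + ((n : ℝ) + 1)⁻¹) T := by
  intro a b hab
  refine min_le_min (add_le_add le_rfl ?_) le_rfl
  have h1 : (0 : ℝ) < (a : ℝ) + 1 := by positivity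
  exact inv_anti₀ h1 (by exact_mod_cast add_le_add_left (Nat.cast_le.2 hab) 1)

lemma seq_to_rho_tendsto {ρ : Ω → ℝ} (hρ : ρ ∈ ST 𝓕 T) (ω : Ω) :
    Tendsto (fun n : ℕ => min (ρ ω + ((n : ℝ) + 1)⁻¹) T) atTop (nhds (ρ ω)) := by
  have h1 : Tendsto (fun n : ℕ => ρ ω + ((n : ℝ) + 1)⁻¹) atTop (nhds (ρ ω + 0)) := by
    refine Tendsto.add tendsto_const_nhds ?_
    simpa [one_div] using tendsto_one_div_add_atTop_nhds_zero_nat (𝕜 := ℝ)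
  rw [add_zero] at h1
  have h2 := h1.min (tendsto_const_nhds (x := T) (f := atTop (α := ℕ)))
  rwa [min_eq_left (st_le_T hρ ω)] at h2

lemma rho_tilde_exists (hT : 0 < T)
    (hC : ∀ ρ ∈ ST 𝓕 T, ∀ τ ∈ ST 𝓕 T, ∀ᵐ ω ∂μ, |U ρ τ ω| ≤ C)
    (hmeas : ∀ ρ τ : Ω → ℝ, ∀ (hρ : ρ ∈ ST 𝓕 T) (hτ : τ ∈ ST 𝓕 T),
      Measurable[(hρ.1.max hτ.1).measurableSpace] (U ρ τ))
    (hloc : ∀ ρ₁ ∈ ST 𝓕 T, ∀ ρ₂ ∈ ST 𝓕 T, ∀ τ₁ ∈ ST 𝓕 T, ∀ τ₂ ∈ ST 𝓕 T,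
      ∀ᵐ ω ∂μ, ρ₁ ω = ρ₂ ω → τ₁ ω = τ₂ ω → U ρ₁ τ₁ ω = U ρ₂ τ₂ ω)
    (hU' : URCE 𝓕 μ T U) {ρ : Ω → ℝ} (hρ : ρ ∈ ST 𝓕 T) {ε : ℝ} (hε : 0 < ε) :
    ∃ ρt : Ω → ℝ, ∃ _hρt : ρt ∈ ST 𝓕 T,
      (∀ ω, ρ ω ≤ ρt ω) ∧ (∀ ω, ρ ω < T → ρ ω < ρt ω) ∧ (∀ ω, ρ ω = T → ρt ω = T) ∧
      (∀ τ' : Ω → ℝ, τ' ∈ ST 𝓕 T → |(∫ ω, U ρ τ' ω ∂μ) - ∫ ω, U ρt τ' ω ∂μ| ≤ ε) ∧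
      (∀ B : Set Ω, MeasurableSet[hρ.1.measurableSpace] B →
        |∫ ω in B, (U ρt ρ ω - U ρ ρ ω) ∂μ| ≤ ε) := by
  obtain ⟨n, h1, h2⟩ := claimA hC hmeas hloc hU' hρ (seq_to_rho_mem hT hρ)
    (seq_to_rho_ge hρ) (fun ω => seq_to_rho_anti ω) (seq_to_rho_tendsto hρ) ε hε
  refine ⟨_, seq_to_rho_mem hT hρ n, seq_to_rho_ge hρ n, fun ω hω => ?_, fun ω hω => ?_,
    fun τ' hτ' => h1 τ' hτ', h2⟩
  · exact lt_min (lt_add_of_pos_right _ (by positivity)) hω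
  · simp only [hω]
    exact min_eq_right (le_add_of_nonneg_right (by positivity))

lemma stepC (hT : 0 < T)
    (hC : ∀ ρ ∈ ST 𝓕 T, ∀ τ ∈ ST 𝓕 T, ∀ᵐ ω ∂μ, |U ρ τ ω| ≤ C)
    (hmeas : ∀ ρ τ : Ω → ℝ, ∀ (hρ : ρ ∈ ST 𝓕 T) (hτ : τ ∈ ST 𝓕 T),
      Measurable[(hρ.1.max hτ.1).measurableSpace] (U ρ τ))
    (hloc : ∀ ρ₁ ∈ ST 𝓕 T, ∀ ρ₂ ∈ ST 𝓕 T, ∀ τ₁ ∈ ST 𝓕 T, ∀ τ₂ ∈ ST 𝓕 T,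
      ∀ᵐ ω ∂μ, ρ₁ ω = ρ₂ ω → τ₁ ω = τ₂ ω → U ρ₁ τ₁ ω = U ρ₂ τ₂ ω)
    (hV2 : IsV2 𝓕 μ T U V2)
    {ρ ρt τ : Ω → ℝ} (hρ : ρ ∈ ST 𝓕 T) (hρt : ρt ∈ ST 𝓕 T) (hτ : τ ∈ ST 𝓕 T)
    {ε : ℝ}
    (hb1 : ∀ τ' : Ω → ℝ, τ' ∈ ST 𝓕 T → |(∫ ω, U ρ τ' ω ∂μ) - ∫ ω, U ρt τ' ω ∂μ| ≤ ε)
    (hb2 : ∀ B : Set Ω, MeasurableSet[hρ.1.measurableSpace] B →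
        |∫ ω in B, (U ρt ρ ω - U ρ ρ ω) ∂μ| ≤ ε) :
    ∫ ω in {ω | τ ω ≤ ρ ω}ᶜ, U ρt τ ω ∂μ
      ≤ (∫ ω in {ω | τ ω ≤ ρ ω}ᶜ, V2 ρ ω ∂μ) + 2 * ε := by
  have hle := hρ.1.measurableSpace_le
  set B := {ω | τ ω ≤ ρ ω} with hBdef
  have hBF : MeasurableSet[hρ.1.measurableSpace] B :=
    by simpa only [WithTop.coe_le_coe] using IsStoppingTime.measurableSet_stopping_time_le hτ.1 hρ.1
  have hBm : MeasurableSet B := hle _ hBF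
  set τ' := fun ω => max (τ ω) (ρ ω) with hτ'def
  have hτ' : τ' ∈ ST 𝓕 T := max_mem_ST hτ hρ
  have i1 : Integrable (U ρt τ) μ := U_integrable hC hmeas hρt hτ
  have i2 : Integrable (U ρt τ') μ := U_integrable hC hmeas hρt hτ'
  have i3 : Integrable (U ρ τ') μ := U_integrable hC hmeas hρ hτ'
  have i4 : Integrable (U ρt ρ) μ := U_integrable hC hmeas hρt hρ
  have i5 : Integrable (U ρ ρ) μ := U_integrable hC hmeas hρ hρ
  have step1 : ∫ ω in Bᶜ, U ρt τ ω ∂μ = ∫ ω in Bᶜ, U ρt τ' ω ∂μ := by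
    refine setIntegral_congr_ae hBm.compl ?_
    filter_upwards [hloc _ hρt _ hρt _ hτ _ hτ'] with ω hω hmem
    have hgt : ρ ω ≤ τ ω := le_of_lt (not_le.1 (by simpa [hBdef] using hmem))
    exact hω rfl (by
      simp only [hτ'def]
      exact (max_eq_left hgt).symm)
  have step2 : (∫ ω in B, U ρt τ' ω ∂μ) + ∫ ω in Bᶜ, U ρt τ' ω ∂μ = ∫ ω, U ρt τ' ω ∂μ :=
    integral_add_compl hBm i2
  have step3 : ∫ ω in B, U ρt τ' ω ∂μ = ∫ ω in B, U ρt ρ ω ∂μ := by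
    refine setIntegral_congr_ae hBm ?_
    filter_upwards [hloc _ hρt _ hρt _ hτ' _ hρ] with ω hω hmem
    exact hω rfl (max_eq_right hmem)
  have step4 : (∫ ω in B, U ρ ρ ω ∂μ) - ε ≤ ∫ ω in B, U ρt ρ ω ∂μ := by
    have := hb2 B hBF
    rw [integral_sub (i4.restrict) (i5.restrict)] at this
    have := (abs_le.1 this).1
    linarith
  have step5 : ∫ ω, U ρt τ' ω ∂μ ≤ (∫ ω, U ρ τ' ω ∂μ) + ε := by
    have := (abs_le.1 (hb1 τ' hτ')).1
    linarith
  have step6 : (∫ ω in B, U ρ τ' ω ∂μ) + ∫ ω in Bᶜ, U ρ τ' ω ∂μ = ∫ ω, U ρ τ' ω ∂μ :=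
    integral_add_compl hBm i3
  have step7 : ∫ ω in B, U ρ τ' ω ∂μ = ∫ ω in B, U ρ ρ ω ∂μ := by
    refine setIntegral_congr_ae hBm ?_
    filter_upwards [hloc _ hρ _ hρ _ hτ' _ hρ] with ω hω hmem
    exact hω rfl (max_eq_right hmem)
  have step8 : ∫ ω in Bᶜ, U ρ τ' ω ∂μ
      = ∫ ω in Bᶜ, (μ[U ρ τ' | hρ.1.measurableSpace]) ω ∂μ :=
    (setIntegral_condExp hle i3 hBF.compl).symm
  have step9 : ∫ ω in Bᶜ, (μ[U ρ τ' | hρ.1.measurableSpace]) ω ∂μ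
      ≤ ∫ ω in Bᶜ, V2 ρ ω ∂μ := by
    refine integral_mono_ae (integrable_condExp.restrict)
      ((V2_integrable hT hC hmeas hV2 hρ).restrict) ?_
    refine ae_restrict_of_ae ?_
    exact (hV2 ρ hρ).2.1 τ' hτ'
      (Filter.Eventually.of_forall fun ω => le_max_right _ _)
  linarith
end Prep

section StepB

variable {Ω : Type*} {m : MeasurableSpace Ω} {μ : Measure Ω} [IsProbabilityMeasure μ]
  {𝓕 : Filtration ℝ m} {T : ℝ} {U : (Ω → ℝ) → (Ω → ℝ) → Ω → ℝ} {C : ℝ}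
  {V1 V2 : (Ω → ℝ) → Ω → ℝ}

lemma paste_min_exists
    (hC : ∀ ρ ∈ ST 𝓕 T, ∀ τ ∈ ST 𝓕 T, ∀ᵐ ω ∂μ, |U ρ τ ω| ≤ C)
    (hmeas : ∀ ρ τ : Ω → ℝ, ∀ (hρ : ρ ∈ ST 𝓕 T) (hτ : τ ∈ ST 𝓕 T),
      Measurable[(hρ.1.max hτ.1).measurableSpace] (U ρ τ))
    (hloc : ∀ ρ₁ ∈ ST 𝓕 T, ∀ ρ₂ ∈ ST 𝓕 T, ∀ τ₁ ∈ ST 𝓕 T, ∀ τ₂ ∈ ST 𝓕 T,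
      ∀ᵐ ω ∂μ, ρ₁ ω = ρ₂ ω → τ₁ ω = τ₂ ω → U ρ₁ τ₁ ω = U ρ₂ τ₂ ω)
    {τ ν₁ ν₂ : Ω → ℝ} (hτ : τ ∈ ST 𝓕 T) (h1 : ν₁ ∈ ST 𝓕 T) (h2 : ν₂ ∈ ST 𝓕 T)
    (hg1 : ∀ ω, τ ω ≤ ν₁ ω) (hg2 : ∀ ω, τ ω ≤ ν₂ ω) :
    ∃ ν : Ω → ℝ, ∃ _hν : ν ∈ ST 𝓕 T, (∀ ω, τ ω ≤ ν ω) ∧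
      (μ[U ν τ|hτ.1.measurableSpace]) =ᵐ[μ]
        (fun ω => min ((μ[U ν₁ τ|hτ.1.measurableSpace]) ω)
          ((μ[U ν₂ τ|hτ.1.measurableSpace]) ω)) := by
  have hle := hτ.1.measurableSpace_le
  set X₁ := μ[U ν₁ τ|hτ.1.measurableSpace] with hX₁
  set X₂ := μ[U ν₂ τ|hτ.1.measurableSpace] with hX₂
  set B₀ := {ω | X₁ ω ≤ X₂ ω} with hB₀
  have hB₀F : MeasurableSet[hτ.1.measurableSpace] B₀ :=
    stronglyMeasurable_condExp.measurableSet_le stronglyMeasurable_condExp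
  have hB₀m : MeasurableSet B₀ := hle _ hB₀F
  set ν := fun ω => if ω ∈ B₀ then ν₁ ω else ν₂ ω with hν
  have hνmem : ν ∈ ST 𝓕 T := paste_mem_ST hτ.1 hB₀F h1 h2 hg1 hg2
  have hνge : ∀ ω, τ ω ≤ ν ω := by
    intro ω
    by_cases hω : ω ∈ B₀ <;> simp only [hν, hω, if_true, if_false]
    exacts [hg1 ω, hg2 ω]
  have i1 : Integrable (U ν₁ τ) μ := U_integrable hC hmeas h1 hτ
  have i2 : Integrable (U ν₂ τ) μ := U_integrable hC hmeas h2 hτ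
  have hUeq : U ν τ =ᵐ[μ] fun ω => B₀.indicator (U ν₁ τ) ω + B₀ᶜ.indicator (U ν₂ τ) ω := by
    filter_upwards [hloc _ hνmem _ h1 _ hτ _ hτ, hloc _ hνmem _ h2 _ hτ _ hτ] with ω hω1 hω2
    by_cases hω : ω ∈ B₀
    · rw [Set.indicator_of_mem hω, Set.indicator_of_notMem (by simpa using hω), add_zero]
      exact hω1 (by simp [hν, hω]) rfl
    · rw [Set.indicator_of_notMem hω, Set.indicator_of_mem (by simpa using hω), zero_add]
      exact hω2 (by simp [hν, hω]) rfl
  refine ⟨ν, hνmem, hνge, ?_⟩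
  calc μ[U ν τ|hτ.1.measurableSpace]
      =ᵐ[μ] μ[(fun ω => B₀.indicator (U ν₁ τ) ω
          + B₀ᶜ.indicator (U ν₂ τ) ω)|hτ.1.measurableSpace] := condExp_congr_ae hUeq
    _ =ᵐ[μ] μ[B₀.indicator (U ν₁ τ)|hτ.1.measurableSpace]
        + μ[B₀ᶜ.indicator (U ν₂ τ)|hτ.1.measurableSpace] :=
        condExp_add (i1.indicator hB₀m) (i2.indicator hB₀m.compl) _
    _ =ᵐ[μ] fun ω => B₀.indicator X₁ ω + B₀ᶜ.indicator X₂ ω := by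
        have e1 := condExp_indicator (μ := μ) i1 hB₀F
        have e2 := condExp_indicator (μ := μ) i2 hB₀F.compl
        filter_upwards [e1, e2] with ω hω1 hω2
        simp only [Pi.add_apply, hω1, hω2, hX₁, hX₂]
    _ =ᵐ[μ] fun ω => min (X₁ ω) (X₂ ω) := by
        refine Filter.Eventually.of_forall fun ω => ?_
        show B₀.indicator X₁ ω + B₀ᶜ.indicator X₂ ω = min (X₁ ω) (X₂ ω)
        by_cases hω : ω ∈ B₀
        · rw [Set.indicator_of_mem hω, Set.indicator_of_notMem (by simpa using hω), add_zero,
            min_eq_left hω]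
        · rw [Set.indicator_of_notMem hω, Set.indicator_of_mem (by simpa using hω), zero_add,
            min_eq_right (le_of_lt (not_le.1 hω))]

end StepB

section StepBMain

variable {Ω : Type*} {m : MeasurableSpace Ω} {μ : Measure Ω} [IsProbabilityMeasure μ]
  {𝓕 : Filtration ℝ m} {T : ℝ} {U : (Ω → ℝ) → (Ω → ℝ) → Ω → ℝ} {C : ℝ}
  {V1 V2 : (Ω → ℝ) → Ω → ℝ}

lemma stepB (hT : 0 < T)
    (hC : ∀ ρ ∈ ST 𝓕 T, ∀ τ ∈ ST 𝓕 T, ∀ᵐ ω ∂μ, |U ρ τ ω| ≤ C)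
    (hmeas : ∀ ρ τ : Ω → ℝ, ∀ (hρ : ρ ∈ ST 𝓕 T) (hτ : τ ∈ ST 𝓕 T),
      Measurable[(hρ.1.max hτ.1).measurableSpace] (U ρ τ))
    (hloc : ∀ ρ₁ ∈ ST 𝓕 T, ∀ ρ₂ ∈ ST 𝓕 T, ∀ τ₁ ∈ ST 𝓕 T, ∀ τ₂ ∈ ST 𝓕 T,
      ∀ᵐ ω ∂μ, ρ₁ ω = ρ₂ ω → τ₁ ω = τ₂ ω → U ρ₁ τ₁ ω = U ρ₂ τ₂ ω)
    (hU' : URCE 𝓕 μ T U) (hV1 : IsV1 𝓕 μ T U V1)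
    {ρ τ : Ω → ℝ} (hρ : ρ ∈ ST 𝓕 T) (hτ : τ ∈ ST 𝓕 T) {ε : ℝ} (hε : 0 < ε) :
    ∃ g : Ω → ℝ, ∃ _hg : g ∈ ST 𝓕 T, (∀ ω, τ ω ≤ g ω) ∧ (∀ ω, τ ω < T → τ ω < g ω) ∧
      (∀ ω, τ ω = T → g ω = T) ∧
      (∫ ω in {ω | τ ω ≤ ρ ω}, U g τ ω ∂μ)
        ≤ (∫ ω in {ω | τ ω ≤ ρ ω}, V1 τ ω ∂μ) + ε := by
  classical
  have hle := hτ.1.measurableSpace_le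
  set B := {ω | τ ω ≤ ρ ω} with hBdef
  have hBF : MeasurableSet[hτ.1.measurableSpace] B :=
    by simpa only [WithTop.coe_le_coe] using hτ.1.measurableSet_le_stopping_time hρ.1
  have hBm : MeasurableSet B := hle _ hBF
  set R := {ν : Ω → ℝ | ν ∈ ST 𝓕 T ∧ ∀ ω, τ ω ≤ ν ω} with hR
  haveI hRne : Nonempty R := ⟨⟨fun _ => T, const_mem_ST hT.le le_rfl, fun ω => st_le_T hτ ω⟩⟩
  set c := ⨅ ν : R, ∫ ω, U (↑ν) τ ω ∂μ with hc
  have hbddR : BddBelow (Set.range fun ν : R => ∫ ω, U (↑ν) τ ω ∂μ) := by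
    refine ⟨-C, ?_⟩
    rintro x ⟨ν, rfl⟩
    have := abs_integral_U_le hC hmeas ν.2.1 hτ
    simp only [neg_le]
    linarith [(abs_le.1 this).1]
  have hcle : ∀ ν : R, c ≤ ∫ ω, U (↑ν) τ ω ∂μ := fun ν => ciInf_le hbddR ν
  have hpick : ∀ k : ℕ, ∃ ν : R, ∫ ω, U (↑ν) τ ω ∂μ < c + ((k : ℝ) + 1)⁻¹ :=
    fun k => exists_lt_of_ciInf_lt (lt_add_of_pos_right c (by positivity))
  have hstep : ∀ (prev : R) (k : ℕ), ∃ next : R,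
      (μ[U (↑next) τ|hτ.1.measurableSpace] ≤ᵐ[μ] μ[U (↑prev) τ|hτ.1.measurableSpace]) ∧
      ∫ ω, U (↑next) τ ω ∂μ < c + ((k : ℝ) + 1)⁻¹ := by
    intro prev k
    obtain ⟨ν', hν'⟩ := hpick k
    obtain ⟨π, hπ, hπge, hπmin⟩ :=
      paste_min_exists hC hmeas hloc hτ ν'.2.1 prev.2.1 ν'.2.2 prev.2.2
    refine ⟨⟨π, hπ, hπge⟩, ?_, ?_⟩
    · filter_upwards [hπmin] with ω hω
      rw [hω]
      exact min_le_right _ _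
    · have e1 : ∫ ω, U π τ ω ∂μ = ∫ ω, (μ[U π τ|hτ.1.measurableSpace]) ω ∂μ :=
        (integral_condExp hle).symm
      have e2 : ∫ ω, (μ[U π τ|hτ.1.measurableSpace]) ω ∂μ
          ≤ ∫ ω, (μ[U (↑ν') τ|hτ.1.measurableSpace]) ω ∂μ := by
        refine integral_mono_ae integrable_condExp integrable_condExp ?_
        filter_upwards [hπmin] with ω hω
        rw [hω]
        exact min_le_left _ _
      have e3 : ∫ ω, (μ[U (↑ν') τ|hτ.1.measurableSpace]) ω ∂μ = ∫ ω, U (↑ν') τ ω ∂μ :=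
        integral_condExp hle
      calc ∫ ω, U π τ ω ∂μ ≤ ∫ ω, U (↑ν') τ ω ∂μ := by rw [e1, ← e3]; exact e2
        _ < c + ((k : ℝ) + 1)⁻¹ := hν'
  set seq : ℕ → R := fun k => Nat.rec (motive := fun _ => R) (hpick 0).choose
    (fun k prev => (hstep prev (k + 1)).choose) k with hseqdef
  have hseqE : ∀ k, ∫ ω, U (↑(seq k)) τ ω ∂μ < c + ((k : ℝ) + 1)⁻¹ := by
    intro k
    cases k with
    | zero => exact (hpick 0).choose_spec
    | succ k => exact ((hstep (seq k) (k + 1)).choose_spec).2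
  have hXanti : ∀ k, μ[U (↑(seq (k+1))) τ|hτ.1.measurableSpace]
      ≤ᵐ[μ] μ[U (↑(seq k)) τ|hτ.1.measurableSpace] :=
    fun k => ((hstep (seq k) (k + 1)).choose_spec).1
  set X : ℕ → Ω → ℝ := fun k => μ[U (↑(seq k)) τ|hτ.1.measurableSpace] with hX
  set W : Ω → ℝ := fun ω => ⨅ k, X k ω with hW
  have hXint : ∀ k, Integrable (X k) μ := fun _ => integrable_condExp
  have hXboundk : ∀ k, ∀ᵐ ω ∂μ, |X k ω| ≤ C :=
    fun k => condexp_abs_le hle (U_integrable hC hmeas (seq k).2.1 hτ) (hC _ (seq k).2.1 _ hτ)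
  have hgood : ∀ᵐ ω ∂μ, (∀ k, X (k+1) ω ≤ X k ω) ∧ (∀ k, |X k ω| ≤ C) :=
    ((ae_all_iff.2 hXanti).and (ae_all_iff.2 hXboundk))
  have hmain : ∀ᵐ ω ∂μ, (∀ k, W ω ≤ X k ω)
      ∧ Tendsto (fun k => X k ω) atTop (nhds (W ω)) ∧ |W ω| ≤ C := by
    filter_upwards [hgood] with ω hω
    obtain ⟨h1, h2⟩ := hω
    have hanti : Antitone fun k => X k ω := antitone_nat_of_succ_le h1
    have hbdd : BddBelow (Set.range fun k => X k ω) := by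
      refine ⟨-C, ?_⟩
      rintro x ⟨k, rfl⟩
      simp only [neg_le]
      linarith [(abs_le.1 (h2 k)).1]
    have hWle : ∀ k, W ω ≤ X k ω := fun k => ciInf_le hbdd k
    have htd : Tendsto (fun k => X k ω) atTop (nhds (W ω)) := tendsto_atTop_ciInf hanti hbdd
    refine ⟨hWle, htd, abs_le.2 ⟨?_, le_trans (hWle 0) (abs_le.1 (h2 0)).2⟩⟩
    exact le_ciInf fun k => (abs_le.1 (h2 k)).1
  have hWmeas : Measurable W :=
    Measurable.iInf fun k => (stronglyMeasurable_condExp.measurable).mono hle le_rfl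
  have hWint : Integrable W μ := by
    refine Integrable.mono' (integrable_const C) hWmeas.aestronglyMeasurable ?_
    filter_upwards [hmain] with ω h
    simpa using h.2.2
  have hWleX : ∀ ν : R, W ≤ᵐ[μ] μ[U (↑ν) τ|hτ.1.measurableSpace] := by
    intro ν
    set Y := μ[U (↑ν) τ|hτ.1.measurableSpace] with hY
    have hYint : Integrable Y μ := integrable_condExp
    have hmax_int : Integrable (fun ω => max (W ω - Y ω) 0) μ := (hWint.sub hYint).pos_part
    have hek : ∀ k : ℕ, ∫ ω, max (W ω - Y ω) 0 ∂μ ≤ ((k : ℝ) + 1)⁻¹ := by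
      intro k
      obtain ⟨π, hπ, hπge, hπmin⟩ :=
        paste_min_exists hC hmeas hloc hτ ν.2.1 (seq k).2.1 ν.2.2 (seq k).2.2
      have hminint : Integrable (fun ω => min (Y ω) (X k ω)) μ :=
        integrable_condExp.congr hπmin
      have h1 : c ≤ ∫ ω, min (Y ω) (X k ω) ∂μ := by
        have h0 := hcle ⟨π, hπ, hπge⟩
        rwa [← integral_condExp hle, integral_congr_ae hπmin] at h0
      have h2 : ∫ ω, max (X k ω - Y ω) 0 ∂μ
          = (∫ ω, X k ω ∂μ) - ∫ ω, min (Y ω) (X k ω) ∂μ := by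
        rw [← integral_sub (hXint k) hminint]
        refine integral_congr_ae (Filter.Eventually.of_forall fun ω => ?_)
        show max (X k ω - Y ω) 0 = X k ω - min (Y ω) (X k ω)
        rcases le_total (Y ω) (X k ω) with h | h
        · rw [min_eq_left h, max_eq_left (by linarith)]
        · rw [min_eq_right h, max_eq_right (by linarith), sub_self]
      have h3 : ∫ ω, X k ω ∂μ < c + ((k : ℝ) + 1)⁻¹ := by
        have := hseqE k
        rwa [← integral_condExp hle (f := U (↑(seq k)) τ)] at this
      have h4 : ∫ ω, max (W ω - Y ω) 0 ∂μ ≤ ∫ ω, max (X k ω - Y ω) 0 ∂μ := by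
        refine integral_mono_ae hmax_int ((hXint k).sub hYint).pos_part ?_
        filter_upwards [hmain] with ω h
        exact max_le_max (sub_le_sub_right (h.1 k) _) le_rfl
      linarith
    have hinvtd : Tendsto (fun k : ℕ => ((k : ℝ) + 1)⁻¹) atTop (nhds 0) := by
      simpa [one_div] using tendsto_one_div_add_atTop_nhds_zero_nat (𝕜 := ℝ)
    have hfin : ∫ ω, max (W ω - Y ω) 0 ∂μ ≤ 0 :=
      ge_of_tendsto hinvtd (Filter.Eventually.of_forall hek)
    have hzero : (∫ ω, max (W ω - Y ω) 0 ∂μ) = 0 :=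
      le_antisymm hfin (integral_nonneg fun ω => le_max_right _ _)
    have hae := (integral_eq_zero_iff_of_nonneg_ae
      (Filter.Eventually.of_forall fun ω => le_max_right _ _) hmax_int).1 hzero
    filter_upwards [hae] with ω hω
    have h0 : max (W ω - Y ω) 0 = 0 := hω
    have h1 := le_max_left (W ω - Y ω) (0 : ℝ)
    rw [h0] at h1
    linarith
  have hWleV1 : W ≤ᵐ[μ] V1 τ := by
    refine (hV1 τ hτ).2.2 W fun ρ3 hρ3 hge3 => ?_
    have hUeq : U (fun ω => max (ρ3 ω) (τ ω)) τ =ᵐ[μ] U ρ3 τ := by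
      filter_upwards [hloc _ (max_mem_ST hρ3 hτ) _ hρ3 _ hτ _ hτ, hge3] with ω hω hge
      exact hω (max_eq_left hge) rfl
    refine (hWleX ⟨_, max_mem_ST hρ3 hτ, fun ω => le_max_right _ _⟩).trans ?_
    exact (condExp_congr_ae hUeq).le
  have hXtoW : Tendsto (fun k => ∫ ω in B, X k ω ∂μ) atTop (nhds (∫ ω in B, W ω ∂μ)) := by
    refine tendsto_integral_of_dominated_convergence (fun _ => C)
      (fun k => (((stronglyMeasurable_condExp.measurable).mono hle
        le_rfl)).aestronglyMeasurable.restrict)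
      ((integrable_const C).restrict)
      (fun k => ae_restrict_of_ae ((hXboundk k).mono fun ω h => by simpa using h))
      (ae_restrict_of_ae (hmain.mono fun ω h => h.2.1))
  have hWleV1' : ∫ ω in B, W ω ∂μ ≤ ∫ ω in B, V1 τ ω ∂μ :=
    integral_mono_ae (hWint.restrict) ((V1_integrable hT hC hmeas hV1 hτ).restrict)
      (ae_restrict_of_ae hWleV1)
  obtain ⟨k, hk⟩ := (hXtoW.eventually
    (gt_mem_nhds (lt_add_of_pos_right _ (by linarith : (0:ℝ) < ε/2)))).exists
  have hBXU : ∫ ω in B, X k ω ∂μ = ∫ ω in B, U (↑(seq k)) τ ω ∂μ :=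
    setIntegral_condExp hle (U_integrable hC hmeas (seq k).2.1 hτ) hBF
  set ρstar := (↑(seq k) : Ω → ℝ) with hρstar
  have hρstarmem : ρstar ∈ ST 𝓕 T := (seq k).2.1
  have hρstarge : ∀ ω, τ ω ≤ ρstar ω := (seq k).2.2
  set g2 : ℕ → Ω → ℝ :=
    fun n ω => max (ρstar ω) (min (τ ω + ((n : ℝ) + 1)⁻¹) T) with hg2
  have hg2mem : ∀ n, g2 n ∈ ST 𝓕 T := fun n => max_mem_ST hρstarmem (seq_to_rho_mem hT hτ n)
  set ρhat : ℕ → Ω → ℝ := fun n ω => if ω ∈ B then g2 n ω else ρstar ω with hρhat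
  have hρhatmem : ∀ n, ρhat n ∈ ST 𝓕 T := fun n =>
    paste_mem_ST hτ.1 hBF (hg2mem n) hρstarmem
      (fun ω => le_trans (hρstarge ω) (le_max_left _ _)) hρstarge
  have hρhatanti : ∀ ω, Antitone fun n => ρhat n ω := by
    intro ω a b hab
    by_cases hω : ω ∈ B <;> simp only [hρhat, hω, if_true, if_false]
    · exact max_le_max le_rfl (seq_to_rho_anti (ρ := τ) (T := T) ω hab)
    · exact le_rfl
  have hρhattd : ∀ ω, Tendsto (fun n => ρhat n ω) atTop (nhds (ρstar ω)) := by
    intro ω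
    by_cases hω : ω ∈ B <;> simp only [hρhat, hω, if_true, if_false]
    · have h0 := (tendsto_const_nhds (x := ρstar ω) (f := (atTop : Filter ℕ))).max
        (seq_to_rho_tendsto hτ ω)
      rwa [max_eq_left (hρstarge ω)] at h0
    · exact tendsto_const_nhds
  have hw2 := urce_seq hU' hρstarmem hρhatmem hρhatanti hρhattd
  obtain ⟨n, hn⟩ := (hw2.eventually (gt_mem_nhds (by linarith : (0:ℝ) < ε/2))).exists
  have habs : |(∫ ω, U ρstar τ ω ∂μ) - ∫ ω, U (ρhat n) τ ω ∂μ| ≤ ε / 2 :=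
    le_trans (le_ciSup (urce_bddAbove hC hmeas hρstarmem (hρhatmem n)) ⟨τ, hτ⟩) hn.le
  refine ⟨g2 n, hg2mem n, ?_, ?_, ?_, ?_⟩
  · exact fun ω => le_trans (seq_to_rho_ge hτ n ω) (le_max_right _ _)
  · exact fun ω hω =>
      lt_of_lt_of_le (lt_min (lt_add_of_pos_right _ (by positivity)) hω) (le_max_right _ _)
  · intro ω hω
    have h1 : min (τ ω + ((n : ℝ) + 1)⁻¹) T = T := by
      rw [hω]
      exact min_eq_right (le_add_of_nonneg_right (by positivity))
    simp only [hg2, h1]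
    exact max_eq_right (st_le_T hρstarmem ω)
  · have e1 : ∫ ω in B, U (g2 n) τ ω ∂μ = ∫ ω in B, U (ρhat n) τ ω ∂μ := by
      refine setIntegral_congr_ae hBm ?_
      filter_upwards [hloc _ (hg2mem n) _ (hρhatmem n) _ hτ _ hτ] with ω hω hmem
      exact hω (by simp [hρhat, hmem]) rfl
    have e2 : (∫ ω in B, U (ρhat n) τ ω ∂μ) + (∫ ω in Bᶜ, U (ρhat n) τ ω ∂μ)
        = ∫ ω, U (ρhat n) τ ω ∂μ :=
      integral_add_compl hBm (U_integrable hC hmeas (hρhatmem n) hτ)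
    have e3 : ∫ ω in Bᶜ, U (ρhat n) τ ω ∂μ = ∫ ω in Bᶜ, U ρstar τ ω ∂μ := by
      refine setIntegral_congr_ae hBm.compl ?_
      filter_upwards [hloc _ (hρhatmem n) _ hρstarmem _ hτ _ hτ] with ω hω hmem
      have hmem' : ω ∉ B := by simpa using hmem
      exact hω (by simp [hρhat, hmem']) rfl
    have e4 : (∫ ω in B, U ρstar τ ω ∂μ) + (∫ ω in Bᶜ, U ρstar τ ω ∂μ)
        = ∫ ω, U ρstar τ ω ∂μ :=
      integral_add_compl hBm (U_integrable hC hmeas hρstarmem hτ)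
    have e5 := (abs_le.1 habs).1
    rw [e1]
    have h6 : ∫ ω in B, U (ρhat n) τ ω ∂μ ≤ (∫ ω in B, U ρstar τ ω ∂μ) + ε / 2 := by
      linarith
    refine h6.trans ?_
    rw [← hBXU]
    linarith

end StepBMain

/-- If the biadmissible family `U` is URCE, then `A̅ ≤ V̅`. -/
theorem stmt_15 {Ω : Type*} {m : MeasurableSpace Ω} (μ : Measure Ω) [IsProbabilityMeasure μ]
    (𝓕 : Filtration ℝ m) (T : ℝ) (hT : 0 < T) (huc : UsualConditions 𝓕 μ T)
    (U : (Ω → ℝ) → (Ω → ℝ) → Ω → ℝ) (hU : Biadmissible 𝓕 μ T U) (hU' : URCE 𝓕 μ T U)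
    (V1 V2 : (Ω → ℝ) → Ω → ℝ) (hV1 : IsV1 𝓕 μ T U V1) (hV2 : IsV2 𝓕 μ T U V2) :
    upperGame 𝓕 μ T (TypeI 𝓕 μ T) U ≤ upperV 𝓕 μ T V1 V2 := by
  rw [upperGame, upperV]
  classical
  obtain ⟨C, hC⟩ := hU.1
  have hmeas := hU.2.1
  have hloc := hU.2.2
  have hTmem : (fun _ : Ω => T) ∈ ST 𝓕 T := const_mem_ST hT.le le_rfl
  have h0mem : (fun _ : Ω => (0 : ℝ)) ∈ ST 𝓕 T := const_mem_ST le_rfl hT.le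
  -- integrability of the value integrand
  have hVint : ∀ ρ τ : Ω → ℝ, ρ ∈ ST 𝓕 T → τ ∈ ST 𝓕 T →
      Integrable (fun ω => if τ ω ≤ ρ ω then V1 τ ω else V2 ρ ω) μ := by
    intro ρ τ hρ hτ
    have hBm : MeasurableSet {ω | τ ω ≤ ρ ω} :=
      hτ.1.measurableSpace_le _ (by simpa only [WithTop.coe_le_coe] using hτ.1.measurableSet_le_stopping_time hρ.1)
    have hm1 : Measurable (V1 τ) :=
      ((hV1 τ hτ).1.measurable).mono hτ.1.measurableSpace_le le_rfl
    have hm2 : Measurable (V2 ρ) :=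
      ((hV2 ρ hρ).1.measurable).mono hρ.1.measurableSpace_le le_rfl
    refine Integrable.mono' (integrable_const C)
      ((Measurable.ite hBm hm1 hm2).aestronglyMeasurable) ?_
    filter_upwards [V1_abs_le hT hC hmeas hV1 hτ, V2_abs_le hT hC hmeas hV2 hρ] with ω h1 h2
    rw [Real.norm_eq_abs]
    by_cases hω : τ ω ≤ ρ ω <;> simp only [hω, if_true, if_false]
    exacts [h1, h2]
  have habsV : ∀ ρ τ : Ω → ℝ, ρ ∈ ST 𝓕 T → τ ∈ ST 𝓕 T →
      |∫ ω, (if τ ω ≤ ρ ω then V1 τ ω else V2 ρ ω) ∂μ| ≤ C := by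
    intro ρ τ hρ hτ
    have h2 : ∀ᵐ ω ∂μ, |if τ ω ≤ ρ ω then V1 τ ω else V2 ρ ω| ≤ C := by
      filter_upwards [V1_abs_le hT hC hmeas hV1 hτ, V2_abs_le hT hC hmeas hV2 hρ] with ω h1 h2
      by_cases hω : τ ω ≤ ρ ω <;> simp only [hω, if_true, if_false]
      exacts [h1, h2]
    have := abs_setIntegral_le (μ := μ) (hVint ρ τ hρ hτ) h2 Set.univ
    simpa using this
  -- reduce to each fixed ρ
  refine le_csInf ⟨_, ⟨_, h0mem, rfl⟩⟩ ?_
  rintro x ⟨ρ, hρ, rfl⟩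
  set S := sSup {y | ∃ τ ∈ ST 𝓕 T,
    y = ∫ ω, (if τ ω ≤ ρ ω then V1 τ ω else V2 ρ ω) ∂μ} with hS
  have hSbdd : BddAbove {y | ∃ τ ∈ ST 𝓕 T,
      y = ∫ ω, (if τ ω ≤ ρ ω then V1 τ ω else V2 ρ ω) ∂μ} := by
    refine ⟨C, ?_⟩
    rintro y ⟨τ, hτ, rfl⟩
    exact (abs_le.1 (habsV ρ τ hρ hτ)).2
  refine le_of_forall_pos_le_add fun ε hε => ?_
  have hδ : 0 < ε / 4 := by linarith
  -- the uniformly-close strict delay of ρ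
  obtain ⟨ρt, hρt, hρtge, hρtlt, hρtT, hb1, hb2⟩ :=
    rho_tilde_exists hT hC hmeas hloc hU' hρ hδ
  -- per-τ best responses
  have hex : ∀ σ, σ ∈ ST 𝓕 T → ∃ g : Ω → ℝ, g ∈ ST 𝓕 T ∧ (∀ ω, σ ω ≤ g ω) ∧
      (∀ ω, σ ω < T → σ ω < g ω) ∧ (∀ ω, σ ω = T → g ω = T) ∧
      (∫ ω in {ω | σ ω ≤ ρ ω}, U g σ ω ∂μ)
        ≤ (∫ ω in {ω | σ ω ≤ ρ ω}, V1 σ ω ∂μ) + ε / 4 := by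
    intro σ hσ
    obtain ⟨g, hg1, hg2, hg3, hg4, hg5⟩ := stepB hT hC hmeas hloc hU' hV1 hρ hσ hδ
    exact ⟨g, hg1, hg2, hg3, hg4, hg5⟩
  set r : (Ω → ℝ) → Ω → ℝ := fun σ =>
    if h : σ ∈ ST 𝓕 T then
      (fun ω => if σ ω ≤ ρ ω then (hex σ h).choose ω else ρt ω)
    else σ with hr
  have hrval : ∀ σ, ∀ h : σ ∈ ST 𝓕 T,
      r σ = fun ω => if σ ω ≤ ρ ω then (hex σ h).choose ω else ρt ω := by
    intro σ h
    simp only [hr, dif_pos h]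
  have hrvalω : ∀ σ, ∀ h : σ ∈ ST 𝓕 T, ∀ ω,
      r σ ω = if σ ω ≤ ρ ω then (hex σ h).choose ω else ρt ω := by
    intro σ h ω
    rw [hrval σ h]
  have hrmem : ∀ σ ∈ ST 𝓕 T, r σ ∈ ST 𝓕 T := by
    intro σ hσ
    rw [hrval σ hσ]
    obtain ⟨hg1, hg2, _, _, _⟩ := (hex σ hσ).choose_spec
    have hB : MeasurableSet[(hσ.1.min hρ.1).measurableSpace] {ω | σ ω ≤ ρ ω} :=
      (IsStoppingTime.measurableSet_min_iff hσ.1 hρ.1 _).2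
        ⟨by simpa only [WithTop.coe_le_coe] using hσ.1.measurableSet_le_stopping_time hρ.1,
          by simpa only [WithTop.coe_le_coe] using IsStoppingTime.measurableSet_stopping_time_le hσ.1 hρ.1⟩
    have := paste_mem_ST (T := T) (hσ.1.min hρ.1) hB hg1 hρt
      (fun ω => le_trans (min_le_left _ _) (hg2 ω))
      (fun ω => le_trans (min_le_right _ _) (hρtge ω))
    exact this
  have hTypeI : TypeI 𝓕 μ T r := by
    refine ⟨hrmem, fun σ₁ hσ₁ σ₂ hσ₂ => Filter.Eventually.of_forall fun ω => ?_⟩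
    obtain ⟨hg11, hg12, hg13, hg14, _⟩ := (hex σ₁ hσ₁).choose_spec
    obtain ⟨hg21, hg22, hg23, hg24, _⟩ := (hex σ₂ hσ₂).choose_spec
    simp only [hrvalω σ₁ hσ₁ ω, hrvalω σ₂ hσ₂ ω]
    by_cases hboth : ¬ σ₁ ω ≤ ρ ω ∧ ¬ σ₂ ω ≤ ρ ω
    · obtain ⟨h1, h2⟩ := hboth
      rw [if_neg h1, if_neg h2]
      rcases le_or_gt (ρt ω) (min (σ₁ ω) (σ₂ ω)) with h | h
      · exact Or.inl ⟨rfl, h⟩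
      · refine Or.inr ?_
        rw [min_self]
        exact h
    · have hor : σ₁ ω ≤ ρ ω ∨ σ₂ ω ≤ ρ ω := by tauto
      {
      by_cases hm : min (σ₁ ω) (σ₂ ω) = T
      · have hs1T : σ₁ ω = T :=
          le_antisymm (st_le_T hσ₁ ω) (hm ▸ min_le_left (σ₁ ω) (σ₂ ω))
        have hs2T : σ₂ ω = T :=
          le_antisymm (st_le_T hσ₂ ω) (hm ▸ min_le_right (σ₁ ω) (σ₂ ω))
        have hρT : ρ ω = T := by
          rcases hor with h | h
          · exact le_antisymm (st_le_T hρ ω) (hs1T ▸ h)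
          · exact le_antisymm (st_le_T hρ ω) (hs2T ▸ h)
        have h1' : σ₁ ω ≤ ρ ω := by rw [hs1T, hρT]
        have h2' : σ₂ ω ≤ ρ ω := by rw [hs2T, hρT]
        rw [if_pos h1', if_pos h2']
        exact Or.inl ⟨by rw [hg14 ω hs1T, hg24 ω hs2T], by rw [hg14 ω hs1T, hm]⟩
      · have hmlt : min (σ₁ ω) (σ₂ ω) < T :=
          lt_of_le_of_ne (le_trans (min_le_left _ _) (st_le_T hσ₁ ω)) hm
        refine Or.inr (lt_min ?_ ?_)
        · by_cases h1' : σ₁ ω ≤ ρ ω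
          · rw [if_pos h1']
            rcases (st_le_T hσ₁ ω).lt_or_eq with hlt | heq
            · exact lt_of_le_of_lt (min_le_left _ _) (hg13 ω hlt)
            · rw [hg14 ω heq, ← heq]
              exact lt_of_lt_of_le hmlt (heq ▸ le_rfl)
          · rw [if_neg h1']
            have h2'' : σ₂ ω ≤ ρ ω := by tauto
            have hρlt : ρ ω < T := lt_of_lt_of_le (not_le.1 h1') (st_le_T hσ₁ ω)
            exact lt_of_le_of_lt (le_trans (min_le_right _ _) h2'') (hρtlt ω hρlt)
        · by_cases h2' : σ₂ ω ≤ ρ ω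
          · rw [if_pos h2']
            rcases (st_le_T hσ₂ ω).lt_or_eq with hlt | heq
            · exact lt_of_le_of_lt (min_le_right _ _) (hg23 ω hlt)
            · rw [hg24 ω heq, ← heq]
              exact lt_of_lt_of_le hmlt (heq ▸ le_rfl)
          · rw [if_neg h2']
            have h1'' : σ₁ ω ≤ ρ ω := by tauto
            have hρlt : ρ ω < T := lt_of_lt_of_le (not_le.1 h2') (st_le_T hσ₂ ω)
            exact lt_of_le_of_lt (le_trans (min_le_left _ _) h1'') (hρtlt ω hρlt) }
  -- bound the payoff of the strategy against each τ
  have hpayoff : ∀ τ, ∀ hτ : τ ∈ ST 𝓕 T,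
      ∫ ω, U (r τ) τ ω ∂μ
        ≤ (∫ ω, (if τ ω ≤ ρ ω then V1 τ ω else V2 ρ ω) ∂μ) + 3 * (ε / 4) := by
    intro τ hτ
    obtain ⟨hg1, hg2, hg3, hg4, hg5⟩ := (hex τ hτ).choose_spec
    set g := (hex τ hτ).choose with hg
    set B := {ω | τ ω ≤ ρ ω} with hB
    have hBm : MeasurableSet B :=
      hτ.1.measurableSpace_le _ (by simpa only [WithTop.coe_le_coe] using hτ.1.measurableSet_le_stopping_time hρ.1)
    have hrt : r τ ∈ ST 𝓕 T := hrmem τ hτ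
    have hint : Integrable (U (r τ) τ) μ := U_integrable hC hmeas hrt hτ
    have hsplit : (∫ ω in B, U (r τ) τ ω ∂μ) + (∫ ω in Bᶜ, U (r τ) τ ω ∂μ)
        = ∫ ω, U (r τ) τ ω ∂μ := integral_add_compl hBm hint
    have e1 : ∫ ω in B, U (r τ) τ ω ∂μ = ∫ ω in B, U g τ ω ∂μ := by
      refine setIntegral_congr_ae hBm ?_
      filter_upwards [hloc _ hrt _ hg1 _ hτ _ hτ] with ω hω hmem
      refine hω ?_ rfl
      rw [hrvalω τ hτ ω]
      simp only [hB, Set.mem_setOf_eq] at hmem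
      rw [if_pos hmem]
    have e2 : ∫ ω in Bᶜ, U (r τ) τ ω ∂μ = ∫ ω in Bᶜ, U ρt τ ω ∂μ := by
      refine setIntegral_congr_ae hBm.compl ?_
      filter_upwards [hloc _ hrt _ hρt _ hτ _ hτ] with ω hω hmem
      refine hω ?_ rfl
      rw [hrvalω τ hτ ω]
      have hmem' : ¬ τ ω ≤ ρ ω := by simpa [hB] using hmem
      rw [if_neg hmem']
    have e3 : ∫ ω in Bᶜ, U ρt τ ω ∂μ ≤ (∫ ω in Bᶜ, V2 ρ ω ∂μ) + 2 * (ε / 4) :=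
      stepC hT hC hmeas hloc hV2 hρ hρt hτ hb1 hb2
    have e4 : ∫ ω, (if τ ω ≤ ρ ω then V1 τ ω else V2 ρ ω) ∂μ
        = (∫ ω in B, V1 τ ω ∂μ) + ∫ ω in Bᶜ, V2 ρ ω ∂μ := by
      rw [← integral_add_compl hBm (hVint ρ τ hρ hτ)]
      congr 1
      · refine setIntegral_congr_ae hBm (Filter.Eventually.of_forall fun ω hω => ?_)
        simp only [hB, Set.mem_setOf_eq] at hω
        simp only [hω, if_true]
      · refine setIntegral_congr_ae hBm.compl (Filter.Eventually.of_forall fun ω hω => ?_)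
        have hω' : ¬ τ ω ≤ ρ ω := by simpa [hB] using hω
        simp only [hω', if_false]
    rw [← hsplit, e1, e2, e4]
    linarith
  -- conclude
  have hxmem : (sSup {y | ∃ τ ∈ ST 𝓕 T, y = ∫ ω, U (r τ) τ ω ∂μ})
      ∈ {x | ∃ r', TypeI 𝓕 μ T r' ∧
        x = sSup {y | ∃ τ ∈ ST 𝓕 T, y = ∫ ω, U (r' τ) τ ω ∂μ}} :=
    ⟨r, hTypeI, rfl⟩
  have hgbdd : BddBelow {x | ∃ r', TypeI 𝓕 μ T r' ∧
      x = sSup {y | ∃ τ ∈ ST 𝓕 T, y = ∫ ω, U (r' τ) τ ω ∂μ}} := by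
    refine ⟨-C, ?_⟩
    rintro x ⟨r', hr', rfl⟩
    have hset : BddAbove {y | ∃ τ ∈ ST 𝓕 T, y = ∫ ω, U (r' τ) τ ω ∂μ} := by
      refine ⟨C, ?_⟩
      rintro y ⟨τ, hτ, rfl⟩
      exact (abs_le.1 (abs_integral_U_le hC hmeas (hr'.1 τ hτ) hτ)).2
    have hmem0 : (∫ ω, U (r' (fun _ => T)) (fun _ => T) ω ∂μ)
        ∈ {y | ∃ τ ∈ ST 𝓕 T, y = ∫ ω, U (r' τ) τ ω ∂μ} := ⟨_, hTmem, rfl⟩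
    refine le_trans ?_ (le_csSup hset hmem0)
    exact (abs_le.1 (abs_integral_U_le hC hmeas (hr'.1 _ hTmem) hTmem)).1
  refine le_trans (csInf_le hgbdd hxmem) ?_
  have hfinal : sSup {y | ∃ τ ∈ ST 𝓕 T, y = ∫ ω, U (r τ) τ ω ∂μ} ≤ S + 3 * (ε / 4) := by
    refine csSup_le ⟨_, ⟨_, hTmem, rfl⟩⟩ ?_
    rintro y ⟨τ, hτ, rfl⟩
    refine le_trans (hpayoff τ hτ) ?_
    have : (∫ ω, (if τ ω ≤ ρ ω then V1 τ ω else V2 ρ ω) ∂μ) ≤ S :=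
      le_csSup hSbdd ⟨τ, hτ, rfl⟩
    linarith
  refine hfinal.trans ?_
  linarith


end OSG
end

section
/- For the payoff U(ρ,τ) := |ρ − τ|, there is no optimal Type I stopping strategy: for every stopping strategy 𝛒 of Type I, sup_{τ ∈ 𝒯} E[|𝛒(τ) − τ|] > 0; equivalently, there is no 𝛒 ∈ 𝕋^i with 𝛒(τ) = τ a.s. for every τ ∈ 𝒯. -/
open MeasureTheory Filter Set

namespace OSG

variable {Ω : Type*} {m : MeasurableSpace Ω}

/-- For the payoff `U(ρ,τ) = |ρ - τ|` there is no optimal Type I strategy: for every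
`𝛒 ∈ 𝕋^i`, `sup_{τ ∈ 𝒯} E[|𝛒(τ) - τ|] > 0`; equivalently, there is no `𝛒 ∈ 𝕋^i` with
`𝛒(τ) = τ` a.s. for every `τ ∈ 𝒯`. -/
theorem stmt_18 {Ω : Type*} {m : MeasurableSpace Ω} (μ : Measure Ω) [IsProbabilityMeasure μ]
    (𝓕 : Filtration ℝ m) (T : ℝ) (hT : 0 < T) (huc : UsualConditions 𝓕 μ T) :
    (∀ r : (Ω → ℝ) → Ω → ℝ, TypeI 𝓕 μ T r →
      0 < sSup {y | ∃ τ ∈ ST 𝓕 T, y = ∫ ω, |r τ ω - τ ω| ∂μ}) ∧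
    ¬ ∃ r : (Ω → ℝ) → Ω → ℝ, TypeI 𝓕 μ T r ∧ ∀ τ ∈ ST 𝓕 T, r τ =ᵐ[μ] τ := by
  have hμ : μ ≠ 0 := IsProbabilityMeasure.ne_zero μ
  have hae : (MeasureTheory.ae μ).NeBot := ae_neBot.mpr hμ
  have hσ₁ : (fun _ : Ω => (0 : ℝ)) ∈ ST 𝓕 T :=
    ⟨isStoppingTime_const 𝓕 0, fun ω => ⟨le_refl 0, hT.le⟩⟩
  have hσ₂ : (fun _ : Ω => T) ∈ ST 𝓕 T :=
    ⟨isStoppingTime_const 𝓕 T, fun ω => ⟨hT.le, le_refl T⟩⟩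
  constructor
  · intro r hr
    set S := {y | ∃ τ ∈ ST 𝓕 T, y = ∫ ω, |r τ ω - τ ω| ∂μ} with hS
    -- S is bounded above by T
    have hbdd : BddAbove S := by
      refine ⟨T, ?_⟩
      rintro y ⟨τ, hτ, rfl⟩
      have hrτ := hr.1 τ hτ
      have hbound : ∀ᵐ ω ∂μ, ‖|r τ ω - τ ω|‖ ≤ T := by
        filter_upwards with ω
        have h1 := hrτ.2 ω
        have h2 := hτ.2 ω
        rw [Real.norm_eq_abs, abs_abs, abs_sub_le_iff]
        constructor <;> linarith [h1.1, h1.2, h2.1, h2.2]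
      have := norm_integral_le_of_norm_le_const (μ := μ) hbound
      simp only [probReal_univ, measure_univ, ENNReal.toReal_one, mul_one] at this
      calc ∫ ω, |r τ ω - τ ω| ∂μ ≤ ‖∫ ω, |r τ ω - τ ω| ∂μ‖ := le_abs_self _
        _ ≤ T := this
    -- the two candidate functions
    have hr1 := hr.1 _ hσ₁
    have hr2 := hr.1 _ hσ₂
    set f₁ : Ω → ℝ := fun ω => |r (fun _ => (0:ℝ)) ω - (fun _ => (0:ℝ)) ω| with hf₁
    set f₂ : Ω → ℝ := fun ω => |r (fun _ => T) ω - (fun _ => T) ω| with hf₂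
    have hm1 : Measurable f₁ :=
      (((hr1.1.measurable.mono hr1.1.measurableSpace_le le_rfl).untopD 0).sub measurable_const).abs
    have hm2 : Measurable f₂ :=
      (((hr2.1.measurable.mono hr2.1.measurableSpace_le le_rfl).untopD 0).sub measurable_const).abs
    have hint1 : Integrable f₁ μ := by
      refine Integrable.mono' (integrable_const T) hm1.aestronglyMeasurable ?_
      filter_upwards with ω
      have h1 := hr1.2 ω
      rw [Real.norm_eq_abs, abs_abs, abs_sub_le_iff]
      constructor <;> simp <;> linarith [h1.1, h1.2]
    have hint2 : Integrable f₂ μ := by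
      refine Integrable.mono' (integrable_const T) hm2.aestronglyMeasurable ?_
      filter_upwards with ω
      have h2 := hr2.2 ω
      rw [Real.norm_eq_abs, abs_abs, abs_sub_le_iff]
      constructor <;> simp <;> linarith [h2.1, h2.2]
    -- a.e., f₁ + f₂ > 0
    have hpos : ∀ᵐ ω ∂μ, 0 < f₁ ω + f₂ ω := by
      filter_upwards [hr.2 _ hσ₁ _ hσ₂] with ω hω
      have h1 := hr1.2 ω
      have h2 := hr2.2 ω
      have hnn1 : (0:ℝ) ≤ f₁ ω := abs_nonneg _
      have hnn2 : (0:ℝ) ≤ f₂ ω := abs_nonneg _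
      rcases hω with ⟨heq, hle⟩ | hlt
      · -- r σ₁ ω = r σ₂ ω ≤ 0, so r σ₂ ω = 0 and f₂ ω = T
        rw [min_eq_left hT.le] at hle
        have h0 : r (fun _ => T) ω = 0 := heq ▸ le_antisymm hle h1.1
        have hf2T : f₂ ω = T := by simp [hf₂, h0, abs_of_nonneg hT.le]
        linarith
      · -- 0 < min (r σ₁ ω) (r σ₂ ω), so f₁ ω > 0
        have h0 : (0:ℝ) < r (fun _ => (0:ℝ)) ω :=
          lt_of_lt_of_le (by simpa [min_eq_left hT.le] using hlt) (min_le_left _ _)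
        have : (0:ℝ) < f₁ ω := by simpa [hf₁, abs_of_pos h0] using h0
        linarith
    -- hence the integral of f₁ + f₂ is positive
    have hintsum : Integrable (fun ω => f₁ ω + f₂ ω) μ := hint1.add hint2
    have hsumpos : 0 < ∫ ω, (f₁ ω + f₂ ω) ∂μ := by
      rw [integral_pos_iff_support_of_nonneg
        (fun ω => add_nonneg (abs_nonneg _) (abs_nonneg _)) hintsum]
      by_contra h
      push_neg at h
      have h0 : μ (Function.support fun ω => f₁ ω + f₂ ω) = 0 := le_antisymm h zero_le
      have : ∀ᵐ ω ∂μ, ¬ (ω ∈ Function.support fun ω => f₁ ω + f₂ ω) :=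
        (measure_eq_zero_iff_ae_notMem (μ := μ)).mp h0
      have : ∀ᵐ _ω ∂μ, False := by
        filter_upwards [this, hpos] with ω hω hω'
        exact hω (by simpa [Function.mem_support] using hω'.ne')
      exact hae.ne (by simpa [Filter.eventually_false_iff_eq_bot] using this)
    rw [integral_add hint1 hint2] at hsumpos
    have hmem1 : (∫ ω, f₁ ω ∂μ) ∈ S := ⟨_, hσ₁, rfl⟩
    have hmem2 : (∫ ω, f₂ ω ∂μ) ∈ S := ⟨_, hσ₂, rfl⟩
    have hnn1 : 0 ≤ ∫ ω, f₁ ω ∂μ := integral_nonneg fun ω => abs_nonneg _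
    have hnn2 : 0 ≤ ∫ ω, f₂ ω ∂μ := integral_nonneg fun ω => abs_nonneg _
    rcases lt_or_ge 0 (∫ ω, f₁ ω ∂μ) with h | h
    · exact lt_of_lt_of_le h (le_csSup hbdd hmem1)
    · have : 0 < ∫ ω, f₂ ω ∂μ := by linarith
      exact lt_of_lt_of_le this (le_csSup hbdd hmem2)
  · rintro ⟨r, hr, hfix⟩
    have h1 := hfix _ hσ₁
    have h2 := hfix _ hσ₂
    have h3 := hr.2 _ hσ₁ _ hσ₂
    have : ∀ᵐ _ω ∂μ, False := by
      filter_upwards [h1, h2, h3] with ω hω1 hω2 hω3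
      rcases hω3 with ⟨heq, _⟩ | hlt
      · rw [hω1, hω2] at heq
        exact absurd heq hT.ne
      · rw [hω1, hω2] at hlt
        exact lt_irrefl _ hlt
    exact hae.ne (by simpa [Filter.eventually_false_iff_eq_bot] using this)

end OSG
end
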